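/- arXiv:2107.11718 — 4 statements merged into one kernel-verified Lean document; each statement's English description precedes it below -/
import Mathlib

section
/- Let n ≥ 1 and α > β > 0. If μ is a Borel probability measure on ℝⁿ minimizing the interaction energy E over all Borel probability measures on ℝⁿ, then μ gives full mass to the set of global minimizers of its potential: μ({x ∈ ℝⁿ : (W_{α,β}*μ)(x) = inf_{z∈ℝⁿ} (W_{α,β}*μ)(z)}) = 1, where (W_{α,β}*μ)(x) = ∫ W_{α,β}(x−y) dμ(y). -/
open MeasureTheory Metric Set
open scoped ENNReal

noncomputable section

/-- Power-law interaction potential `W_{α,β}(x) = |x|^α/α − |x|^β/β` on `ℝⁿ`. -/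
def Wab {n : ℕ} (a b : ℝ) (x : EuclideanSpace ℝ (Fin n)) : ℝ :=
  ‖x‖ ^ a / a - ‖x‖ ^ b / b

/-- The interaction energy `E(μ) = (1/2)∬ W_{α,β}(x−y) dμ(x)dμ(y)`, represented faithfully as an
`[0,∞]`-valued quantity by subtracting the constant `1/α − 1/β = min W_{α,β} < 0` from the
(bounded-below) integrand: for probability measures `μ`, this equals `E(μ) − (1/α − 1/β)/2`
in `(−∞,∞]`, so the ordering (hence the set of minimizers) is exactly that of `E`. -/
def energy {n : ℕ} (a b : ℝ) (μ : Measure (EuclideanSpace ℝ (Fin n))) : ℝ≥0∞ :=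
  (1 / 2 : ℝ≥0∞) *
    ∫⁻ p : EuclideanSpace ℝ (Fin n) × EuclideanSpace ℝ (Fin n),
      ENNReal.ofReal (Wab a b (p.1 - p.2) - (1 / a - 1 / b)) ∂(μ.prod μ)

lemma pow_div_sub_ge (a b r : ℝ) (hb : 0 < b) (hab : b < a) (hr : 0 ≤ r) :
    0 ≤ r ^ a / a - r ^ b / b - (1 / a - 1 / b) := by
  have ha : 0 < a := hb.trans hab
  have hs : (-1 : ℝ) ≤ r ^ b - 1 := by
    have : (0:ℝ) ≤ r ^ b := Real.rpow_nonneg hr b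
    linarith
  have hp : (1:ℝ) ≤ a / b := (one_le_div hb).2 hab.le
  have key : 1 + (a / b) * (r ^ b - 1) ≤ (1 + (r ^ b - 1)) ^ (a / b) :=
    one_add_mul_self_le_rpow_one_add hs hp
  have h1 : (1 + (r ^ b - 1)) = r ^ b := by ring
  rw [h1] at key
  have h2 : (r ^ b) ^ (a / b) = r ^ a := by
    rw [← Real.rpow_mul hr]
    congr 1
    field_simp
  rw [h2] at key
  have h3 : b * r ^ a - a * r ^ b - b + a ≥ 0 := by
    have h' : b + a * (r ^ b - 1) ≤ b * r ^ a := by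
      calc b + a * (r ^ b - 1) = b * (1 + a / b * (r ^ b - 1)) := by
            field_simp
        _ ≤ b * r ^ a := mul_le_mul_of_nonneg_left key hb.le
    nlinarith [h']
  have h4 : r ^ a / a - r ^ b / b - (1 / a - 1 / b)
      = (b * r ^ a - a * r ^ b - b + a) / (a * b) := by
    field_simp
    ring
  rw [h4]
  positivity

lemma add_rpow_le (a u v : ℝ) (ha : 0 ≤ a) (hu : 0 ≤ u) (hv : 0 ≤ v) :
    (u + v) ^ a ≤ 2 ^ a * (u ^ a + v ^ a) := by
  have h1 : u + v ≤ 2 * max u v := by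
    rcases le_total u v with h | h
    · simp [max_eq_right h]; linarith
    · simp [max_eq_left h]; linarith
  have h2 : (u + v) ^ a ≤ (2 * max u v) ^ a :=
    Real.rpow_le_rpow (by linarith) h1 ha
  have h3 : (2 * max u v) ^ a = 2 ^ a * (max u v) ^ a :=
    Real.mul_rpow (by norm_num) (le_max_iff.2 (Or.inl hu))
  have h4 : (max u v) ^ a ≤ u ^ a + v ^ a := by
    rcases le_total u v with h | h
    · rw [max_eq_right h]
      nlinarith [Real.rpow_nonneg hu a, Real.rpow_nonneg hv a]
    · rw [max_eq_left h]
      nlinarith [Real.rpow_nonneg hu a, Real.rpow_nonneg hv a]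
  calc (u + v) ^ a ≤ 2 ^ a * (max u v) ^ a := by rw [← h3]; exact h2
    _ ≤ 2 ^ a * (u ^ a + v ^ a) := by
        have : (0:ℝ) ≤ (2:ℝ) ^ a := Real.rpow_nonneg (by norm_num) a
        nlinarith

lemma moment_dom (a b : ℝ) (hb : 0 < b) (hab : b < a) :
    ∃ K : ℝ, ∀ r : ℝ, 0 ≤ r →
      r ^ a ≤ 2 * a * (r ^ a / a - r ^ b / b - (1 / a - 1 / b)) + K := by
  have ha : 0 < a := hb.trans hab
  set X : ℝ := 2 * a / b with hX
  have hXpos : 0 < X := by positivity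
  set R : ℝ := X ^ (a - b)⁻¹ with hR
  have hRpos : 0 < R := Real.rpow_pos_of_pos hXpos _
  have hRX : R ^ (a - b) = X := by
    rw [hR, ← Real.rpow_mul hXpos.le, inv_mul_cancel₀ (by linarith : a - b ≠ 0),
      Real.rpow_one]
  refine ⟨X * R ^ b + 2 * a * (1 / a - 1 / b), fun r hr => ?_⟩
  have key : X * r ^ b ≤ r ^ a + X * R ^ b := by
    rcases le_total r R with h | h
    · have : r ^ b ≤ R ^ b := Real.rpow_le_rpow hr h hb.le
      nlinarith [Real.rpow_nonneg hr a]
    · have h1 : X ≤ r ^ (a - b) := by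
        rw [← hRX]
        exact Real.rpow_le_rpow hRpos.le h (by linarith)
      have h2 : r ^ (a - b) * r ^ b = r ^ a := by
        rw [← Real.rpow_add (lt_of_lt_of_le hRpos h)]
        ring_nf
      have hrb : (0:ℝ) ≤ r ^ b := Real.rpow_nonneg hr b
      nlinarith [Real.rpow_nonneg hRpos.le b, mul_nonneg hXpos.le (Real.rpow_nonneg hRpos.le b)]
  have expand : 2 * a * (r ^ a / a - r ^ b / b - (1 / a - 1 / b))
      = 2 * r ^ a - X * r ^ b - 2 * a * (1 / a - 1 / b) := by
    rw [hX]; field_simp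
  rw [expand]
  nlinarith [key, Real.rpow_nonneg hr a]

/-- affine bound for lintegrals over a probability measure -/
lemma lintegral_affine_bound {α : Type*} [MeasurableSpace α] (μ : Measure α)
    [IsProbabilityMeasure μ] (f g : α → ℝ≥0∞) (C D : ℝ≥0∞) (hg : Measurable g)
    (hpt : ∀ y, f y ≤ C * g y + D) :
    ∫⁻ y, f y ∂μ ≤ C * ∫⁻ y, g y ∂μ + D := by
  calc ∫⁻ y, f y ∂μ ≤ ∫⁻ y, (C * g y + D) ∂μ := lintegral_mono hpt
    _ = C * ∫⁻ y, g y ∂μ + D := by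
        rw [lintegral_add_right _ measurable_const, lintegral_const_mul _ hg, lintegral_const,
          measure_univ, mul_one]

set_option maxHeartbeats 2000000 in
/-- any global energy minimizer `μ` gives full mass to the set of global minimizers
of its own potential `V = W_{α,β} * μ`. -/
theorem minimizer_concentrated_on_argmin_potential (n : ℕ) (hn : 1 ≤ n)
    (a b : ℝ) (hb : 0 < b) (hab : b < a)
    (μ : Measure (EuclideanSpace ℝ (Fin n))) (hμ : IsProbabilityMeasure μ)
    (hmin : ∀ ν : Measure (EuclideanSpace ℝ (Fin n)), IsProbabilityMeasure ν →
      energy a b μ ≤ energy a b ν)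
    (V : EuclideanSpace ℝ (Fin n) → ℝ)
    (hV : V = fun x => ∫ y, Wab a b (x - y) ∂μ) :
    μ {x | V x = ⨅ z, V z} = 1 := by
  have ha : 0 < a := hb.trans hab
  set c : ℝ := 1 / a - 1 / b with hc
  have hcneg : c ≤ 0 := by
    have : 1 / a ≤ 1 / b := one_div_le_one_div_of_le hb hab.le
    rw [hc]; linarith
  have h2a : (0:ℝ) ≤ (2:ℝ) ^ a := Real.rpow_nonneg (by norm_num) a
  -- basic facts about Wab
  have hWcont : Continuous (Wab a b : EuclideanSpace ℝ (Fin n) → ℝ) := by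
    unfold Wab
    exact ((continuous_norm.rpow_const fun x => Or.inr ha.le).div_const a).sub
      ((continuous_norm.rpow_const fun x => Or.inr hb.le).div_const b)
  have hW0 : ∀ z : EuclideanSpace ℝ (Fin n), 0 ≤ Wab a b z - c := fun z => by
    have := pow_div_sub_ge a b ‖z‖ hb hab (norm_nonneg z)
    unfold Wab; rw [hc]; linarith
  have hWsym : ∀ x y : EuclideanSpace ℝ (Fin n), Wab a b (x - y) = Wab a b (y - x) := by
    intro x y; unfold Wab; rw [norm_sub_rev]
  have hWzero : Wab a b (0 : EuclideanSpace ℝ (Fin n)) = 0 := by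
    unfold Wab
    simp [Real.zero_rpow ha.ne', Real.zero_rpow hb.ne']
  have hWub : ∀ z : EuclideanSpace ℝ (Fin n), Wab a b z - c ≤ ‖z‖ ^ a / a - c := by
    intro z
    unfold Wab
    have : (0:ℝ) ≤ ‖z‖ ^ b / b := by positivity
    linarith
  -- kernel and potential
  set F : EuclideanSpace ℝ (Fin n) × EuclideanSpace ℝ (Fin n) → ℝ≥0∞ :=
    fun p => ENNReal.ofReal (Wab a b (p.1 - p.2) - c) with hFdef
  have hFmeas : Measurable F := by
    apply Measurable.ennreal_ofReal
    exact ((hWcont.comp (continuous_fst.sub continuous_snd)).sub continuous_const).measurable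
  set L : EuclideanSpace ℝ (Fin n) → ℝ≥0∞ :=
    fun x => ∫⁻ y, ENNReal.ofReal (Wab a b (x - y) - c) ∂μ with hLdef
  have hLmeas : Measurable L := hFmeas.lintegral_prod_right'
  have hWm : ∀ x : EuclideanSpace ℝ (Fin n),
      Measurable fun y : EuclideanSpace ℝ (Fin n) => ENNReal.ofReal (Wab a b (x - y) - c) :=
    fun x => ((hWcont.comp (continuous_const.sub continuous_id)).sub
      continuous_const).measurable.ennreal_ofReal
  have hNm : Measurable fun y : EuclideanSpace ℝ (Fin n) => ENNReal.ofReal (‖y‖ ^ a) :=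
    ((continuous_norm.rpow_const fun x => Or.inr ha.le)).measurable.ennreal_ofReal
  set I : ℝ≥0∞ := ∫⁻ p, F p ∂(μ.prod μ) with hIdef
  have hIprod : I = ∫⁻ x, L x ∂μ := lintegral_prod F hFmeas.aemeasurable
  have henergy : ∀ ρ : Measure (EuclideanSpace ℝ (Fin n)),
      energy a b ρ = (1/2 : ℝ≥0∞) * ∫⁻ p, F p ∂(ρ.prod ρ) := fun ρ => rfl
  -- Step 1 : I is finite
  have hIfin : I ≠ ∞ := by
    have h := hmin (Measure.dirac 0) inferInstance
    rw [henergy, henergy, Measure.dirac_prod_dirac, lintegral_dirac' _ hFmeas, ← hIdef] at h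
    intro hI
    rw [hI, ENNReal.mul_top (by norm_num)] at h
    have hne : (1/2 : ℝ≥0∞) * F (0, 0) ≠ ⊤ := by
      simp only [hFdef]
      exact ENNReal.mul_ne_top (by norm_num) ENNReal.ofReal_ne_top
    exact hne (top_le_iff.mp h)
  -- Step 2 : some point with finite potential
  obtain ⟨x₀, hx₀⟩ : ∃ x, L x < ∞ := by
    have hae : ∀ᵐ x ∂μ, L x < ∞ := ae_lt_top hLmeas (by rw [← hIprod]; exact hIfin)
    have hne : μ ≠ 0 := by
      intro h0
      have := hμ.measure_univ
      rw [h0] at this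
      simp at this
    have : (MeasureTheory.ae μ).NeBot := ae_neBot.2 hne
    exact hae.exists
  -- Step 3 : finite a-moment
  obtain ⟨K, hK⟩ := moment_dom a b hb hab
  set M : ℝ≥0∞ := ∫⁻ y, ENNReal.ofReal (‖y‖ ^ a) ∂μ with hMdef
  have hMfin : M ≠ ∞ := by
    have hpt : ∀ y, ENNReal.ofReal (‖y‖ ^ a)
        ≤ ENNReal.ofReal (2 ^ a * (2 * a)) * ENNReal.ofReal (Wab a b (x₀ - y) - c)
          + ENNReal.ofReal (2 ^ a * ‖x₀‖ ^ a + 2 ^ a * K) := by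
      intro y
      have hb1 : ‖y‖ ≤ ‖x₀‖ + ‖x₀ - y‖ := by
        have h := norm_sub_norm_le y x₀
        rw [norm_sub_rev] at h
        linarith
      have h2 : ‖y‖ ^ a ≤ 2 ^ a * (‖x₀‖ ^ a + ‖x₀ - y‖ ^ a) := by
        calc ‖y‖ ^ a ≤ (‖x₀‖ + ‖x₀ - y‖) ^ a :=
              Real.rpow_le_rpow (norm_nonneg _) hb1 ha.le
          _ ≤ _ := add_rpow_le a _ _ ha.le (norm_nonneg _) (norm_nonneg _)
      have h3 : ‖x₀ - y‖ ^ a ≤ 2 * a * (Wab a b (x₀ - y) - c) + K := by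
        have := hK ‖x₀ - y‖ (norm_nonneg _)
        unfold Wab; rw [hc]
        unfold Wab at this
        linarith
      have h4 : ‖y‖ ^ a ≤ 2 ^ a * (2 * a) * (Wab a b (x₀ - y) - c)
          + (2 ^ a * ‖x₀‖ ^ a + 2 ^ a * K) := by
        nlinarith [mul_le_mul_of_nonneg_left h3 h2a, h2]
      calc ENNReal.ofReal (‖y‖ ^ a)
          ≤ ENNReal.ofReal (2 ^ a * (2 * a) * (Wab a b (x₀ - y) - c)
              + (2 ^ a * ‖x₀‖ ^ a + 2 ^ a * K)) := ENNReal.ofReal_le_ofReal h4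
        _ ≤ ENNReal.ofReal (2 ^ a * (2 * a) * (Wab a b (x₀ - y) - c))
              + ENNReal.ofReal (2 ^ a * ‖x₀‖ ^ a + 2 ^ a * K) := ENNReal.ofReal_add_le
        _ = ENNReal.ofReal (2 ^ a * (2 * a)) * ENNReal.ofReal (Wab a b (x₀ - y) - c)
              + ENNReal.ofReal (2 ^ a * ‖x₀‖ ^ a + 2 ^ a * K) := by
            rw [ENNReal.ofReal_mul (by positivity)]
    have hbd := lintegral_affine_bound μ _ _ _ _ (hWm x₀) hpt
    rw [← hMdef] at hbd
    have hfin : ENNReal.ofReal (2 ^ a * (2 * a)) * L x₀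
        + ENNReal.ofReal (2 ^ a * ‖x₀‖ ^ a + 2 ^ a * K) ≠ ∞ :=
      ENNReal.add_ne_top.2 ⟨ENNReal.mul_ne_top ENNReal.ofReal_ne_top hx₀.ne,
        ENNReal.ofReal_ne_top⟩
    exact fun hM => hfin (top_le_iff.mp (hM ▸ hbd))
  -- Step 4 : L is finite everywhere
  have hLfin : ∀ x, L x ≠ ∞ := by
    intro x
    have hpt : ∀ y, ENNReal.ofReal (Wab a b (x - y) - c)
        ≤ ENNReal.ofReal (2 ^ a / a) * ENNReal.ofReal (‖y‖ ^ a)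
          + ENNReal.ofReal (2 ^ a / a * ‖x‖ ^ a - c) := by
      intro y
      have h3 : ‖x - y‖ ^ a ≤ 2 ^ a * (‖x‖ ^ a + ‖y‖ ^ a) := by
        calc ‖x - y‖ ^ a ≤ (‖x‖ + ‖y‖) ^ a :=
              Real.rpow_le_rpow (norm_nonneg _) (norm_sub_le x y) ha.le
          _ ≤ _ := add_rpow_le a _ _ ha.le (norm_nonneg _) (norm_nonneg _)
      have h1 : Wab a b (x - y) - c ≤ 2 ^ a / a * ‖y‖ ^ a + (2 ^ a / a * ‖x‖ ^ a - c) := by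
        have h2 := hWub (x - y)
        have h5 : ‖x - y‖ ^ a / a ≤ 2 ^ a * (‖x‖ ^ a + ‖y‖ ^ a) / a :=
          (div_le_div_iff_of_pos_right ha).2 h3
        have h6 : (2:ℝ) ^ a * (‖x‖ ^ a + ‖y‖ ^ a) / a
            = 2 ^ a / a * ‖y‖ ^ a + 2 ^ a / a * ‖x‖ ^ a := by ring
        linarith
      calc ENNReal.ofReal (Wab a b (x - y) - c)
          ≤ ENNReal.ofReal (2 ^ a / a * ‖y‖ ^ a + (2 ^ a / a * ‖x‖ ^ a - c)) :=
            ENNReal.ofReal_le_ofReal h1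
        _ ≤ ENNReal.ofReal (2 ^ a / a * ‖y‖ ^ a)
              + ENNReal.ofReal (2 ^ a / a * ‖x‖ ^ a - c) := ENNReal.ofReal_add_le
        _ = ENNReal.ofReal (2 ^ a / a) * ENNReal.ofReal (‖y‖ ^ a)
              + ENNReal.ofReal (2 ^ a / a * ‖x‖ ^ a - c) := by
            rw [ENNReal.ofReal_mul (by positivity)]
    have hbd := lintegral_affine_bound μ _ _ _ _ hNm hpt
    rw [← hMdef] at hbd
    have hfin : ENNReal.ofReal (2 ^ a / a) * M
        + ENNReal.ofReal (2 ^ a / a * ‖x‖ ^ a - c) ≠ ∞ :=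
      ENNReal.add_ne_top.2 ⟨ENNReal.mul_ne_top ENNReal.ofReal_ne_top hMfin,
        ENNReal.ofReal_ne_top⟩
    exact fun hL => hfin (top_le_iff.mp (hL ▸ hbd))
  -- Step 5 : key inequality  I.toReal ≤ (L x).toReal  for every x
  have hkey : ∀ x, I.toReal ≤ (L x).toReal := by
    intro x
    have hstep : ∀ t : ℝ, 0 < t → t < 1 →
        I.toReal ≤ (1-t)^2 * I.toReal + 2*t*(1-t)*(L x).toReal + t^2*(-c) := by
      intro t ht ht1
      set s : ℝ≥0∞ := ENNReal.ofReal (1 - t) with hs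
      set tt : ℝ≥0∞ := ENNReal.ofReal t with htt
      set ν : Measure (EuclideanSpace ℝ (Fin n)) := s • μ + tt • Measure.dirac x with hnu
      have hνp : IsProbabilityMeasure ν := by
        constructor
        rw [hnu]
        simp only [Measure.coe_add, Pi.add_apply, Measure.coe_smul, Pi.smul_apply,
          smul_eq_mul, measure_univ, mul_one]
        rw [hs, htt, ← ENNReal.ofReal_add (by linarith) ht.le]
        norm_num
      haveI := hνp
      -- expansion of the product lintegral
      have hHm : Measurable fun x' : EuclideanSpace ℝ (Fin n) => F (x', x) :=
        hFmeas.comp (measurable_id.prodMk measurable_const)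
      have hFx' : ∀ x' : EuclideanSpace ℝ (Fin n),
          Measurable fun y : EuclideanSpace ℝ (Fin n) => F (x', y) := fun x' =>
        hFmeas.comp (measurable_const.prodMk measurable_id)
      have hGm : Measurable fun x' : EuclideanSpace ℝ (Fin n) => ∫⁻ y, F (x', y) ∂μ :=
        hFmeas.lintegral_prod_right'
      have inner : ∀ x' : EuclideanSpace ℝ (Fin n),
          ∫⁻ y, F (x', y) ∂ν = s * (∫⁻ y, F (x', y) ∂μ) + tt * F (x', x) := by
        intro x'
        rw [hnu, lintegral_add_measure, lintegral_smul_measure, lintegral_smul_measure,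
          lintegral_dirac' _ (hFx' x'), smul_eq_mul, smul_eq_mul]
      have hBL : (∫⁻ x', F (x', x) ∂μ) = L x := by
        rw [hLdef]
        refine lintegral_congr fun x' => ?_
        simp only [hFdef]
        rw [hWsym x' x]
      have hGL : (∫⁻ y, F (x, y) ∂μ) = L x := rfl
      have hFxx : F (x, x) = ENNReal.ofReal (-c) := by
        simp only [hFdef, sub_self, hWzero, zero_sub]
      have hexp : (∫⁻ p, F p ∂(ν.prod ν))
          = s*s*I + s*tt*(L x) + tt*s*(L x) + tt*tt*(ENNReal.ofReal (-c)) := by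
        rw [lintegral_prod F hFmeas.aemeasurable]
        have e1 : ∀ x' : EuclideanSpace ℝ (Fin n),
            (∫⁻ y, F (x', y) ∂ν) = s * (∫⁻ y, F (x', y) ∂μ) + tt * F (x', x) := inner
        calc (∫⁻ x', ∫⁻ y, F (x', y) ∂ν ∂ν)
            = ∫⁻ x', (s * (∫⁻ y, F (x', y) ∂μ) + tt * F (x', x)) ∂ν :=
              lintegral_congr e1
          _ = s * (∫⁻ x', (s * (∫⁻ y, F (x', y) ∂μ) + tt * F (x', x)) ∂μ)
              + tt * (s * (∫⁻ y, F (x, y) ∂μ) + tt * F (x, x)) := by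
              rw [hnu, lintegral_add_measure, lintegral_smul_measure, lintegral_smul_measure,
                lintegral_dirac' _ (f := fun x' => s * (∫⁻ y, F (x', y) ∂μ) + tt * F (x', x))
                    ((hGm.const_mul s).add (hHm.const_mul tt)),
                  smul_eq_mul, smul_eq_mul]
          _ = s * (s * I + tt * (L x)) + tt * (s * (L x) + tt * ENNReal.ofReal (-c)) := by
              rw [lintegral_add_right _ (hHm.const_mul tt), lintegral_const_mul _ hGm,
                lintegral_const_mul _ hHm, hBL, hGL, hFxx,
                ← lintegral_prod F hFmeas.aemeasurable, ← hIdef]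
          _ = s*s*I + s*tt*(L x) + tt*s*(L x) + tt*tt*(ENNReal.ofReal (-c)) := by ring
      have hle := hmin ν hνp
      rw [henergy, henergy, hexp, ← hIdef] at hle
      have hle2 : I ≤ s*s*I + s*tt*(L x) + tt*s*(L x) + tt*tt*ENNReal.ofReal (-c) :=
        (ENNReal.mul_le_mul_iff_right (by norm_num) (by norm_num)).1 hle
      have ht1' : (0:ℝ) ≤ 1 - t := by linarith
      have hI0 : 0 ≤ I.toReal := ENNReal.toReal_nonneg
      have hL0 : 0 ≤ (L x).toReal := ENNReal.toReal_nonneg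
      have hIof : I = ENNReal.ofReal I.toReal := (ENNReal.ofReal_toReal hIfin).symm
      have hLof : L x = ENNReal.ofReal ((L x).toReal) := (ENNReal.ofReal_toReal (hLfin x)).symm
      rw [hIof, hLof] at hle2
      have hc0 : (0:ℝ) ≤ -c := by linarith
      have p1 : (0:ℝ) ≤ (1-t)*(1-t)*I.toReal := mul_nonneg (mul_nonneg ht1' ht1') hI0
      have p2 : (0:ℝ) ≤ (1-t)*t*(L x).toReal := mul_nonneg (mul_nonneg ht1' ht.le) hL0
      have p3 : (0:ℝ) ≤ t*(1-t)*(L x).toReal := mul_nonneg (mul_nonneg ht.le ht1') hL0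
      have p4 : (0:ℝ) ≤ t*t*(-c) := mul_nonneg (mul_nonneg ht.le ht.le) hc0
      have e1 : ENNReal.ofReal ((1-t)*(1-t)*I.toReal)
          = s * s * ENNReal.ofReal I.toReal := by
        rw [ENNReal.ofReal_mul (mul_nonneg ht1' ht1'), ENNReal.ofReal_mul ht1']
      have e2 : ENNReal.ofReal ((1-t)*t*(L x).toReal)
          = s * tt * ENNReal.ofReal (L x).toReal := by
        rw [ENNReal.ofReal_mul (mul_nonneg ht1' ht.le), ENNReal.ofReal_mul ht1']
      have e3 : ENNReal.ofReal (t*(1-t)*(L x).toReal)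
          = tt * s * ENNReal.ofReal (L x).toReal := by
        rw [ENNReal.ofReal_mul (mul_nonneg ht.le ht1'), ENNReal.ofReal_mul ht.le]
      have e4 : ENNReal.ofReal (t*t*(-c)) = tt * tt * ENNReal.ofReal (-c) := by
        rw [ENNReal.ofReal_mul (mul_nonneg ht.le ht.le), ENNReal.ofReal_mul ht.le]
      rw [← e1, ← e2, ← e3, ← e4,
        ← ENNReal.ofReal_add p1 p2,
        ← ENNReal.ofReal_add (by linarith) p3,
        ← ENNReal.ofReal_add (by linarith) p4] at hle2
      have hreal : I.toReal ≤ (1-t)*(1-t)*I.toReal + (1-t)*t*(L x).toReal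
          + t*(1-t)*(L x).toReal + t*t*(-c) :=
        (ENNReal.ofReal_le_ofReal_iff (by linarith)).1 hle2
      nlinarith [hreal]
    by_contra hcon
    push_neg at hcon
    have h2 : ∀ t : ℝ, 0 < t → t < 1 →
        2*(I.toReal - (L x).toReal) ≤ t*(I.toReal - 2*(L x).toReal - c) := by
      intro t ht ht1
      have h := hstep t ht ht1
      nlinarith [h, ht]
    set D : ℝ := I.toReal - 2*(L x).toReal - c with hD
    rcases le_or_gt D 0 with hD0 | hD0
    · have := h2 (1/2) (by norm_num) (by norm_num)
      nlinarith
    · have hgt : 0 < I.toReal - (L x).toReal := by linarith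
      set t0 : ℝ := min (1/2) ((I.toReal - (L x).toReal)/D) with ht0
      have ht0pos : 0 < t0 := lt_min (by norm_num) (by positivity)
      have ht0lt : t0 < 1 := lt_of_le_of_lt (min_le_left _ _) (by norm_num)
      have hineq := h2 t0 ht0pos ht0lt
      have htD : t0 * D ≤ I.toReal - (L x).toReal := by
        have hle' : t0 ≤ (I.toReal - (L x).toReal)/D := min_le_right _ _
        calc t0 * D ≤ ((I.toReal - (L x).toReal)/D) * D :=
              mul_le_mul_of_nonneg_right hle' hD0.le
          _ = I.toReal - (L x).toReal := div_mul_cancel₀ _ hD0.ne'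
      nlinarith
  -- Step 6 : integrability and the formula  V x = (L x).toReal + c
  have hVL : ∀ x, V x = (L x).toReal + c := by
    intro x
    have hg : ∀ y, 0 ≤ Wab a b (x - y) - c := fun y => hW0 _
    have hgm : AEStronglyMeasurable (fun y => Wab a b (x - y) - c) μ :=
      ((hWcont.comp (continuous_const.sub continuous_id)).sub
        continuous_const).aestronglyMeasurable
    have hint : Integrable (fun y => Wab a b (x - y) - c) μ := by
      refine ⟨hgm, ?_⟩
      rw [hasFiniteIntegral_iff_ofReal (Filter.Eventually.of_forall hg)]
      exact lt_of_le_of_ne le_top (hLfin x)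
    have hVx : V x = ∫ y, ((Wab a b (x - y) - c) + c) ∂μ := by rw [hV]; simp
    rw [hVx, integral_add hint (integrable_const c), integral_const, probReal_univ, one_smul,
      integral_eq_lintegral_of_nonneg_ae (Filter.Eventually.of_forall hg) hgm]
  -- Step 7/8 : conclusion
  set m : ℝ := ⨅ z, V z with hm
  have hVlow : ∀ x, c ≤ V x := fun x => by
    rw [hVL x]
    have := ENNReal.toReal_nonneg (a := L x)
    linarith
  have hbdd : BddBelow (Set.range V) := ⟨c, by rintro v ⟨z, rfl⟩; exact hVlow z⟩
  have hmle : ∀ x, m ≤ V x := fun x => ciInf_le hbdd x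
  have hVge : ∀ x, I.toReal + c ≤ V x := fun x => by
    rw [hVL x]; linarith [hkey x]
  have hmge : I.toReal + c ≤ m := le_ciInf hVge
  have hLint : Integrable (fun x => (L x).toReal) μ :=
    integrable_toReal_of_lintegral_ne_top hLmeas.aemeasurable
      (by rw [← hIprod]; exact hIfin)
  have hVfun : V = fun x => (L x).toReal + c := funext hVL
  have hVint : Integrable V μ := by
    rw [hVfun]
    exact hLint.add (integrable_const c)
  have hintV : ∫ x, V x ∂μ = I.toReal + c := by
    rw [hVfun]
    rw [integral_add hLint (integrable_const c), integral_const, probReal_univ, one_smul,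
      integral_toReal hLmeas.aemeasurable (ae_of_all μ fun x => lt_of_le_of_ne le_top (hLfin x)),
      ← hIprod]
  have hsub : Integrable (fun x => V x - m) μ := hVint.sub (integrable_const m)
  have hzero : ∫ x, (V x - m) ∂μ = 0 := by
    have h1 : ∫ x, (V x - m) ∂μ = (I.toReal + c) - m := by
      rw [integral_sub hVint (integrable_const m), hintV, integral_const, probReal_univ, one_smul]
    have h2 : 0 ≤ ∫ x, (V x - m) ∂μ :=
      integral_nonneg fun x => sub_nonneg.2 (hmle x)
    rw [h1] at h2 ⊢
    linarith
  have hae : (fun x => V x - m) =ᵐ[μ] 0 :=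
    (integral_eq_zero_iff_of_nonneg (fun x => sub_nonneg.2 (hmle x)) hsub).1 hzero
  have haem : ∀ᵐ x ∂μ, V x = m := by
    filter_upwards [hae] with x hx
    have hx' : V x - m = 0 := hx
    linarith
  have h0 : μ {x | ¬ (V x = m)} = 0 := haem
  have hle1 : (1:ℝ≥0∞) ≤ μ {x | V x = m} + μ {x | ¬ (V x = m)} := by
    rw [← measure_univ (μ := μ)]
    refine le_trans (measure_mono ?_) (measure_union_le _ _)
    intro y _
    by_cases h : V y = m
    · exact Or.inl h
    · exact Or.inr h
  rw [h0, add_zero] at hle1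
  exact le_antisymm prob_le_one hle1
end
end

section
/- For every real r with 0 < r < 1, the integral ∫_0^π (r − cos θ)/(r² − 2r cos θ + 1) dθ equals 0. -/
open Real

/-- for `0 < r < 1`, `∫_0^π (r − cos θ)/(r² − 2r cos θ + 1) dθ = 0`. -/
theorem integral_sub_cos_div_quadratic_eq_zero (r : ℝ) (hr0 : 0 < r) (hr1 : r < 1) :
    ∫ θ in (0:ℝ)..π, (r - cos θ) / (r ^ 2 - 2 * r * cos θ + 1) = 0 := by
  have hden : ∀ θ : ℝ, 0 < r ^ 2 - 2 * r * cos θ + 1 := by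
    intro θ
    nlinarith [cos_le_one θ, neg_one_le_cos θ, sq_nonneg (1 - r)]
  have hd2 : ∀ θ : ℝ, (0:ℝ) < 1 - r * cos θ := by
    intro θ
    nlinarith [cos_le_one θ]
  have hderiv : ∀ θ ∈ Set.uIcc (0:ℝ) π,
      HasDerivAt (fun θ => -(1 / r) * arctan (r * sin θ / (1 - r * cos θ)))
        ((r - cos θ) / (r ^ 2 - 2 * r * cos θ + 1)) θ := by
    intro θ _
    have hnum : HasDerivAt (fun θ : ℝ => r * sin θ) (r * cos θ) θ :=
      (hasDerivAt_sin θ).const_mul r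
    have hden' : HasDerivAt (fun θ : ℝ => 1 - r * cos θ) (r * sin θ) θ := by
      have := ((hasDerivAt_cos θ).const_mul r).const_sub 1
      simpa using this
    have hq : HasDerivAt (fun θ : ℝ => r * sin θ / (1 - r * cos θ))
        ((r * cos θ * (1 - r * cos θ) - r * sin θ * (r * sin θ)) / (1 - r * cos θ) ^ 2) θ :=
      hnum.div hden' (ne_of_gt (hd2 θ))
    have ha := hq.arctan
    have h := ha.const_mul (-(1 / r))
    refine h.congr_deriv ?_
    symm
    have hs := sin_sq_add_cos_sq θ
    have h1 : (1 - r * cos θ) ≠ 0 := ne_of_gt (hd2 θ)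
    have h2 : (r ^ 2 - 2 * r * cos θ + 1) ≠ 0 := ne_of_gt (hden θ)
    have h3 : (1 + (r * sin θ / (1 - r * cos θ)) ^ 2) =
        (r ^ 2 - 2 * r * cos θ + 1) / (1 - r * cos θ) ^ 2 := by
      field_simp
      nlinarith [hs]
    rw [h3]
    field_simp
    linear_combination (-r / (r * (r - cos θ * 2) + 1)) * hs
  have hcont : IntervalIntegrable
      (fun θ => (r - cos θ) / (r ^ 2 - 2 * r * cos θ + 1)) MeasureTheory.volume 0 π := by
    apply Continuous.intervalIntegrable
    exact (continuous_const.sub continuous_cos).div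
      (by continuity) (fun θ => ne_of_gt (hden θ))
  have := intervalIntegral.integral_eq_sub_of_hasDerivAt hderiv hcont
  rw [this]
  simp [Real.sin_pi, Real.cos_pi]
end

section
/- Let n ≥ 2, fix r ∈ (0,1), and for α ≥ 2 set g_α(r) := ∫_{Sⁿ⁻¹} (r − y₁) |r e₁ − y|^{α−4} dσ(y), where σ is the uniform probability measure on the unit sphere of ℝⁿ, e₁ is a unit vector and y₁ = ⟨y, e₁⟩ (this integral converges absolutely for 0 < r < 1). If α₀ ≥ 2 and g_{α₀}(r) ≥ 0, then g_α(r) > 0 for every α > α₀. -/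
open MeasureTheory Metric Set
open scoped ENNReal RealInnerProductSpace

noncomputable section

/-- The uniform (normalized `(n−1)`-dimensional Hausdorff) probability measure on the centered
sphere of radius `r` in `ℝⁿ`. -/
def sphereShell (n : ℕ) (r : ℝ) : Measure (EuclideanSpace ℝ (Fin n)) :=
  (μH[(n : ℝ) - 1] (sphere (0 : EuclideanSpace ℝ (Fin n)) r))⁻¹ •
    (μH[(n : ℝ) - 1]).restrict (sphere (0 : EuclideanSpace ℝ (Fin n)) r)

namespace GBootstrap

variable {m : ℕ}

/-- prepend a coordinate -/
def toE (c : ℝ) (u : EuclideanSpace ℝ (Fin m)) : EuclideanSpace ℝ (Fin (m+1)) :=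
  WithLp.toLp 2 (Fin.cons c (WithLp.ofLp u) : Fin (m+1) → ℝ)

/-- drop the first coordinate -/
def tailE (y : EuclideanSpace ℝ (Fin (m+1))) : EuclideanSpace ℝ (Fin m) :=
  WithLp.toLp 2 (fun i : Fin m => y i.succ)

lemma toE_tailE (y : EuclideanSpace ℝ (Fin (m+1))) : toE (y 0) (tailE y) = y :=
  by ext i; exact congrFun (Fin.cons_self_tail (α := fun _ => ℝ) y.ofLp) i

lemma norm_sq_eq (u : EuclideanSpace ℝ (Fin m)) : ‖u‖^2 = ∑ i, (u i)^2 := by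
  rw [EuclideanSpace.norm_eq, Real.sq_sqrt (by positivity)]
  simp [sq_abs]

lemma norm_toE_sq (c : ℝ) (u : EuclideanSpace ℝ (Fin m)) :
    ‖toE c u‖^2 = c^2 + ‖u‖^2 := by
  rw [norm_sq_eq, norm_sq_eq, Fin.sum_univ_succ]
  simp [toE]

lemma tailE_toE (c : ℝ) (u : EuclideanSpace ℝ (Fin m)) : tailE (toE c u) = u :=
  by ext i; simp [tailE, toE]

lemma dist_toE_sq (c c' : ℝ) (u u' : EuclideanSpace ℝ (Fin m)) :
    dist (toE c u) (toE c' u')^2 = (c - c')^2 + dist u u'^2 := by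
  rw [dist_eq_norm, dist_eq_norm]
  have h : toE c u - toE c' u' = toE (c - c') (u - u') := by
    ext i
    refine Fin.cases ?_ ?_ i <;> simp [toE, Fin.cons_succ] <;> rfl
  rw [h, norm_toE_sq]

lemma lipschitz_tailE : LipschitzWith 1 (tailE (m := m)) := by
  apply LipschitzWith.of_dist_le_mul
  intro y y'
  rw [NNReal.coe_one, one_mul]
  have h1 : dist y y'^2 = (y 0 - y' 0)^2 + dist (tailE y) (tailE y')^2 := by
    rw [← toE_tailE y, ← toE_tailE y'] ; rw [dist_toE_sq] ; simp [toE_tailE]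
  nlinarith [dist_nonneg (x := y) (y := y'), dist_nonneg (x := tailE y) (y := tailE y'),
    sq_nonneg (y 0 - y' 0)]

lemma le_of_sq_le_sq {a b : ℝ} (ha : 0 ≤ a) (hb : 0 ≤ b) (h : a^2 ≤ b^2) : a ≤ b := by
  nlinarith

/-- Haar-measure facts in Euclidean space of dimension `m`. -/
lemma haar_inst :
    Measure.IsAddHaarMeasure (μH[(m:ℝ)] : Measure (EuclideanSpace ℝ (Fin m))) := by
  have h : ((Module.finrank ℝ (EuclideanSpace ℝ (Fin m))) : ℝ) = (m:ℝ) := by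
    rw [finrank_euclideanSpace_fin]
  rw [← h]
  infer_instance

lemma cball_lt_top (R : ℝ) :
    μH[(m:ℝ)] (closedBall (0 : EuclideanSpace ℝ (Fin m)) R) < ⊤ := by
  have := haar_inst (m := m)
  exact (isCompact_closedBall _ _).measure_lt_top

lemma cball_pos :
    0 < μH[(m:ℝ)] (closedBall (0 : EuclideanSpace ℝ (Fin m)) 1) := by
  have := haar_inst (m := m)
  calc (0:ℝ≥0∞) < μH[(m:ℝ)] (ball (0 : EuclideanSpace ℝ (Fin m)) 1) :=
        isOpen_ball.measure_pos _ (by simp)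
    _ ≤ _ := measure_mono ball_subset_closedBall

/-- the graph map -/
def Φ (s : ℝ) (u : EuclideanSpace ℝ (Fin m)) : EuclideanSpace ℝ (Fin (m+1)) :=
  toE (s * Real.sqrt (1 - ‖u‖^2)) u

def D (m : ℕ) : Set (EuclideanSpace ℝ (Fin m)) :=
  {u | ‖u‖^2 ≤ 1 - 1/(m+1)}

lemma D_subset : D m ⊆ closedBall 0 1 := by
  intro u hu
  simp only [D, mem_setOf_eq] at hu
  have hb : (0:ℝ) < 1/(m+1) := by positivity
  simp only [mem_closedBall, dist_zero_right]
  nlinarith [norm_nonneg u]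

lemma phi_lip (s : ℝ) (hs : |s| = 1) :
    LipschitzOnWith (Real.sqrt (m+2)).toNNReal (Φ (m := m) s) (D m) := by
  rw [lipschitzOnWith_iff_dist_le_mul]
  intro u hu v hv
  simp only [D, mem_setOf_eq] at hu hv
  have hb : (0:ℝ) < 1/(m+1) := by positivity
  have hu1 : ‖u‖ ≤ 1 := by nlinarith [norm_nonneg u]
  have hv1 : ‖v‖ ≤ 1 := by nlinarith [norm_nonneg v]
  set a := 1 - ‖u‖^2 with ha
  set b := 1 - ‖v‖^2 with hb'
  have ha0 : 1/(m+1) ≤ a := by linarith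
  have hb0 : 1/(m+1) ≤ b := by linarith
  have hsa : Real.sqrt (1/(m+1)) ≤ Real.sqrt a := Real.sqrt_le_sqrt ha0
  have hsb : Real.sqrt (1/(m+1)) ≤ Real.sqrt b := Real.sqrt_le_sqrt hb0
  have hsp : (0:ℝ) < Real.sqrt (1/(m+1)) := Real.sqrt_pos.mpr hb
  have hdiff : |Real.sqrt a - Real.sqrt b| * (Real.sqrt a + Real.sqrt b) = |a - b| := by
    rw [← abs_of_nonneg (by positivity : (0:ℝ) ≤ Real.sqrt a + Real.sqrt b), ← abs_mul]
    congr 1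
    have h1 : Real.sqrt a ^ 2 = a := Real.sq_sqrt (by linarith)
    have h2 : Real.sqrt b ^ 2 = b := Real.sq_sqrt (by linarith)
    nlinarith
  have hab : |a - b| ≤ 2 * dist u v := by
    have h3 : |‖v‖ - ‖u‖| ≤ dist u v := by
      rw [dist_comm, dist_eq_norm]; exact abs_norm_sub_norm_le _ _
    have h5 : |a - b| = |‖v‖ + ‖u‖| * |‖v‖ - ‖u‖| := by
      rw [← abs_mul]; congr 1; ring
    rw [h5]
    have h4 : |‖v‖ + ‖u‖| ≤ 2 := by
      rw [abs_of_nonneg (by positivity)]; linarith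
    calc |‖v‖ + ‖u‖| * |‖v‖ - ‖u‖| ≤ 2 * |‖v‖ - ‖u‖| :=
          mul_le_mul_of_nonneg_right h4 (abs_nonneg _)
      _ ≤ 2 * dist u v := by linarith [h3]
  have hm1 : (0:ℝ) < Real.sqrt (m+1) := Real.sqrt_pos.mpr (by positivity)
  have hprod : Real.sqrt (1/(m+1)) * Real.sqrt (m+1) = 1 := by
    rw [← Real.sqrt_mul (by positivity)]
    rw [one_div_mul_cancel (by positivity), Real.sqrt_one]
  have hkey : |Real.sqrt a - Real.sqrt b| ≤ Real.sqrt (m+1) * dist u v := by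
    have h2 : |Real.sqrt a - Real.sqrt b| * (2 * Real.sqrt (1/(m+1))) ≤ 2 * dist u v := by
      calc |Real.sqrt a - Real.sqrt b| * (2 * Real.sqrt (1/(m+1)))
          ≤ |Real.sqrt a - Real.sqrt b| * (Real.sqrt a + Real.sqrt b) :=
            mul_le_mul_of_nonneg_left (by linarith) (abs_nonneg _)
        _ = |a - b| := hdiff
        _ ≤ 2 * dist u v := hab
    nlinarith [mul_le_mul_of_nonneg_right h2 (le_of_lt hm1),
      abs_nonneg (Real.sqrt a - Real.sqrt b)]
  have hdist2 : dist (Φ s u) (Φ s v)^2 = (s*Real.sqrt a - s*Real.sqrt b)^2 + dist u v^2 := by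
    rw [dist_eq_norm, dist_eq_norm]
    have hsub : Φ s u - Φ s v = toE (s*Real.sqrt a - s*Real.sqrt b) (u - v) := by
      ext i
      refine Fin.cases ?_ ?_ i <;> simp [Φ, toE, ← ha, ← hb'] <;> rfl
    rw [hsub, norm_toE_sq]
  have hs2 : (s*Real.sqrt a - s*Real.sqrt b)^2 = (Real.sqrt a - Real.sqrt b)^2 := by
    have h6 : (s*Real.sqrt a - s*Real.sqrt b)^2 = s^2 * (Real.sqrt a - Real.sqrt b)^2 := by ring
    rw [h6, ← sq_abs s, hs]; ring
  have hco : ((Real.sqrt (m+2)).toNNReal : ℝ) = Real.sqrt (m+2) :=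
    Real.coe_toNNReal _ (Real.sqrt_nonneg _)
  rw [hco]
  have hd0 : (0:ℝ) ≤ Real.sqrt (m+2) * dist u v := by positivity
  refine le_of_sq_le_sq dist_nonneg hd0 ?_
  have hsq : (Real.sqrt (m+2) * dist u v)^2 = (m+2) * dist u v^2 := by
    rw [mul_pow, Real.sq_sqrt (by positivity)]
  rw [hsq, hdist2, hs2]
  have h7 : (Real.sqrt a - Real.sqrt b)^2 ≤ (m+1) * dist u v^2 := by
    have h9 := abs_nonneg (Real.sqrt a - Real.sqrt b)
    have h8 : |Real.sqrt a - Real.sqrt b|^2 ≤ (Real.sqrt (m+1) * dist u v)^2 := by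
      apply pow_le_pow_left₀ h9 hkey
    rw [sq_abs] at h8
    rw [mul_pow, Real.sq_sqrt (by positivity)] at h8
    exact h8
  nlinarith [dist_nonneg (x := u) (y := v)]

/-- The part of the sphere where the first coordinate is large. -/
def B (m : ℕ) : Set (EuclideanSpace ℝ (Fin (m+1))) :=
  sphere 0 1 ∩ {y | 1/(m+1 : ℝ) ≤ (y 0)^2}

lemma B_subset : B m ⊆ Φ 1 '' D m ∪ Φ (-1) '' D m := by
  rintro y ⟨hy1, hy2⟩
  simp only [mem_sphere_iff_norm, sub_zero] at hy1
  simp only [mem_setOf_eq] at hy2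
  set u := tailE y with hu
  have hnorm : (y 0)^2 + ‖u‖^2 = 1 := by
    have h := norm_toE_sq (y 0) u
    rw [hu, toE_tailE, hy1] at h
    linarith [h.symm]
  have hD : u ∈ D m := by
    simp only [D, mem_setOf_eq]; linarith
  have hsq : Real.sqrt (1 - ‖u‖^2) = |y 0| := by
    rw [show 1 - ‖u‖^2 = (y 0)^2 by linarith, Real.sqrt_sq_eq_abs]
  rcases le_or_gt 0 (y 0) with h0 | h0
  · left
    exact ⟨u, hD, by rw [Φ, hsq, one_mul, abs_of_nonneg h0, hu, toE_tailE]⟩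
  · right
    exact ⟨u, hD, by
      rw [Φ, hsq, abs_of_neg h0, hu, show -1 * -(y 0) = y 0 by ring, toE_tailE]⟩

/-- the coordinate swap isometry -/
def swapIso (i : Fin (m+1)) :
    EuclideanSpace ℝ (Fin (m+1)) ≃ₗᵢ[ℝ] EuclideanSpace ℝ (Fin (m+1)) :=
  LinearIsometryEquiv.piLpCongrLeft 2 ℝ ℝ (Equiv.swap (0 : Fin (m+1)) i)

lemma swapIso_apply (i : Fin (m+1)) (y : EuclideanSpace ℝ (Fin (m+1))) (j : Fin (m+1)) :
    swapIso i y j = y (Equiv.swap (0 : Fin (m+1)) i j) := by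
  rw [swapIso, LinearIsometryEquiv.piLpCongrLeft_apply]
  simp [Equiv.piCongrLeft'_apply, Equiv.symm_swap]

lemma swapIso_symm (i : Fin (m+1)) : (swapIso i).symm = swapIso i := by
  rw [swapIso, LinearIsometryEquiv.piLpCongrLeft_symm]
  congr 1

lemma sphere_subset_cover :
    sphere (0 : EuclideanSpace ℝ (Fin (m+1))) 1 ⊆ ⋃ i : Fin (m+1), (swapIso i) '' B m := by
  intro y hy
  have hy1 : ‖y‖ = 1 := by simpa [mem_sphere_iff_norm] using hy
  have hsum : ∑ j, (y j)^2 = 1 := by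
    rw [← norm_sq_eq, hy1]; norm_num
  have hex : ∃ i : Fin (m+1), 1/(m+1 : ℝ) ≤ (y i)^2 := by
    by_contra hcon
    push_neg at hcon
    have hlt : ∑ j, (y j)^2 < ∑ _j : Fin (m+1), 1/(m+1:ℝ) :=
      Finset.sum_lt_sum_of_nonempty ⟨0, Finset.mem_univ 0⟩ (fun j _ => hcon j)
    rw [Finset.sum_const, Finset.card_univ, Fintype.card_fin, hsum] at hlt
    rw [nsmul_eq_mul] at hlt
    push_cast at hlt
    rw [mul_one_div, div_self (by positivity : (m+1:ℝ) ≠ 0)] at hlt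
    exact lt_irrefl 1 hlt
  obtain ⟨i, hi⟩ := hex
  refine mem_iUnion.mpr ⟨i, (swapIso i).symm y, ⟨?_, ?_⟩, ?_⟩
  · simp only [mem_sphere_iff_norm, sub_zero]
    rw [LinearIsometryEquiv.norm_map]; exact hy1
  · simp only [mem_setOf_eq]
    have h4 : (swapIso i).symm y 0 = y i := by
      rw [swapIso_symm, swapIso_apply, Equiv.swap_apply_left]
    rw [h4]; exact hi
  · exact (swapIso i).apply_symm_apply y

/-- Finiteness of the Hausdorff measure of the unit sphere. -/
lemma sphere_lt_top :
    μH[(m:ℝ)] (sphere (0 : EuclideanSpace ℝ (Fin (m+1))) 1) < ⊤ := by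
  have himg : ∀ s : ℝ, |s| = 1 → μH[(m:ℝ)] (Φ (m := m) s '' D m) < ⊤ := by
    intro s hs
    calc μH[(m:ℝ)] (Φ (m := m) s '' D m)
        ≤ ((Real.sqrt (m+2)).toNNReal : ℝ≥0∞) ^ (m:ℝ) * μH[(m:ℝ)] (D m) :=
          (phi_lip s hs).hausdorffMeasure_image_le (by positivity)
      _ ≤ ((Real.sqrt (m+2)).toNNReal : ℝ≥0∞) ^ (m:ℝ) *
            μH[(m:ℝ)] (closedBall (0 : EuclideanSpace ℝ (Fin m)) 1) := by
          gcongr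
          exact D_subset
      _ < ⊤ := ENNReal.mul_lt_top
          (ENNReal.rpow_lt_top_of_nonneg (by positivity) ENNReal.coe_ne_top)
          (cball_lt_top 1)
  have hB : μH[(m:ℝ)] (B m) < ⊤ := by
    calc μH[(m:ℝ)] (B m) ≤ μH[(m:ℝ)] (Φ 1 '' D m ∪ Φ (-1) '' D m) := measure_mono B_subset
      _ ≤ μH[(m:ℝ)] (Φ 1 '' D m) + μH[(m:ℝ)] (Φ (-1) '' D m) := measure_union_le _ _
      _ < ⊤ := ENNReal.add_lt_top.mpr ⟨himg 1 (by norm_num), himg (-1) (by norm_num)⟩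
  calc μH[(m:ℝ)] (sphere (0 : EuclideanSpace ℝ (Fin (m+1))) 1)
      ≤ μH[(m:ℝ)] (⋃ i : Fin (m+1), (swapIso i) '' B m) := measure_mono sphere_subset_cover
    _ ≤ ∑' i : Fin (m+1), μH[(m:ℝ)] ((swapIso i) '' B m) := measure_iUnion_le _
    _ = ∑' _i : Fin (m+1), μH[(m:ℝ)] (B m) := by
        congr 1
        funext i
        exact (swapIso i).isometry.hausdorffMeasure_image
          (Or.inr (swapIso i).surjective) (B m)
    _ < ⊤ := by
        rw [tsum_fintype]
        exact ENNReal.sum_lt_top.mpr fun i _ => hB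

/-- Positivity of the Hausdorff measure of a closed hemisphere. -/
lemma hemisphere_pos (e₁ : EuclideanSpace ℝ (Fin (m+1))) (he₁ : ‖e₁‖ = 1) :
    0 < μH[(m:ℝ)] (sphere (0 : EuclideanSpace ℝ (Fin (m+1))) 1 ∩ {y | ⟪y, e₁⟫ ≤ 0}) := by
  set e : EuclideanSpace ℝ (Fin (m+1)) := EuclideanSpace.single 0 1 with he
  have hee : ‖e‖ = 1 := by rw [he, EuclideanSpace.norm_single]; norm_num
  set T := Submodule.reflection (ℝ ∙ (e - e₁))ᗮ with hT
  have hTe : T e = e₁ := Submodule.reflection_sub (by rw [hee, he₁])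
  set A₀ : Set (EuclideanSpace ℝ (Fin (m+1))) := sphere 0 1 ∩ {y | y 0 ≤ 0} with hA₀
  have himg : T '' A₀ ⊆ sphere 0 1 ∩ {y | ⟪y, e₁⟫ ≤ 0} := by
    rintro _ ⟨x, ⟨hx1, hx2⟩, rfl⟩
    simp only [mem_sphere_iff_norm, sub_zero] at hx1
    constructor
    · simp only [mem_sphere_iff_norm, sub_zero]
      rw [LinearIsometryEquiv.norm_map]; exact hx1
    · simp only [mem_setOf_eq]
      rw [← hTe, LinearIsometryEquiv.inner_map_map, he, EuclideanSpace.inner_single_right]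
      simpa using hx2
  have hsub : closedBall (0 : EuclideanSpace ℝ (Fin m)) 1 ⊆ tailE '' A₀ := by
    intro u hu
    simp only [mem_closedBall, dist_zero_right] at hu
    set c := -Real.sqrt (1 - ‖u‖^2) with hc
    refine ⟨toE c u, ⟨?_, ?_⟩, tailE_toE c u⟩
    · simp only [mem_sphere_iff_norm, sub_zero]
      have hnn : (0:ℝ) ≤ 1 - ‖u‖^2 := by nlinarith [norm_nonneg u]
      have h2 : ‖toE c u‖^2 = 1 := by
        rw [norm_toE_sq, hc, neg_pow, Real.sq_sqrt hnn]; ring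
      rw [← Real.sqrt_sq (norm_nonneg (toE c u)), h2, Real.sqrt_one]
    · simp only [mem_setOf_eq]
      show c ≤ 0
      rw [hc]
      simp [Real.sqrt_nonneg]
  calc (0:ℝ≥0∞) < μH[(m:ℝ)] (closedBall (0 : EuclideanSpace ℝ (Fin m)) 1) := cball_pos
    _ ≤ μH[(m:ℝ)] (tailE '' A₀) := measure_mono hsub
    _ ≤ (1:ℝ≥0∞) ^ (m:ℝ) * μH[(m:ℝ)] A₀ := by
        simpa using lipschitz_tailE.hausdorffMeasure_image_le
          (by positivity : (0:ℝ) ≤ (m:ℝ)) A₀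
    _ = μH[(m:ℝ)] A₀ := by simp
    _ = μH[(m:ℝ)] (T '' A₀) :=
        (T.isometry.hausdorffMeasure_image (Or.inr T.surjective) A₀).symm
    _ ≤ _ := measure_mono himg

/-- rpow bounds for a pinched base. -/
lemma rpow_bounds {t e lo hi : ℝ} (hlo : 0 < lo) (h1 : lo ≤ t) (h2 : t ≤ hi) :
    min (lo ^ e) (hi ^ e) ≤ t ^ e ∧ t ^ e ≤ max (lo ^ e) (hi ^ e) := by
  rcases le_or_gt 0 e with he | he
  · exact ⟨le_trans (min_le_left _ _) (Real.rpow_le_rpow hlo.le h1 he),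
      le_trans (Real.rpow_le_rpow (by linarith) h2 he) (le_max_right _ _)⟩
  · exact ⟨le_trans (min_le_right _ _)
        (Real.rpow_le_rpow_of_nonpos (lt_of_lt_of_le hlo h1) h2 he.le),
      le_trans (Real.rpow_le_rpow_of_nonpos hlo h1 he.le) (le_max_left _ _)⟩

end GBootstrap

open GBootstrap

set_option maxHeartbeats 2000000 in
/-- for `n ≥ 2`, fixed `r ∈ (0,1)` and
`g_α(r) := ∫ (r − y₁)|r e₁ − y|^{α−4} dσ(y)`: if `α₀ ≥ 2` and `g_{α₀}(r) ≥ 0`, then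
`g_α(r) > 0` for every `α > α₀`. -/
theorem g_bootstrap_positive (n : ℕ) (hn : 2 ≤ n)
    (e₁ : EuclideanSpace ℝ (Fin n)) (he₁ : ‖e₁‖ = 1)
    (r : ℝ) (hr0 : 0 < r) (hr1 : r < 1)
    (g : ℝ → ℝ)
    (hg : g = fun α : ℝ =>
      ∫ y, (r - ⟪y, e₁⟫) * ‖r • e₁ - y‖ ^ (α - 4) ∂(sphereShell n 1))
    (α₀ : ℝ) (hα₀ : 2 ≤ α₀) (h0 : 0 ≤ g α₀) :
    ∀ α : ℝ, α₀ < α → 0 < g α := by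
  obtain ⟨m, rfl⟩ : ∃ m, n = m + 1 := ⟨n - 1, by omega⟩
  intro α hα
  subst hg
  have hd : ((m+1 : ℕ) : ℝ) - 1 = (m:ℝ) := by push_cast; ring
  set μ : Measure (EuclideanSpace ℝ (Fin (m+1))) := μH[(m:ℝ)] with hμ
  set S : Set (EuclideanSpace ℝ (Fin (m+1))) := sphere 0 1 with hS
  set A : Set (EuclideanSpace ℝ (Fin (m+1))) := {y | ⟪y, e₁⟫ ≤ 0} with hA
  have hshell : sphereShell (m+1) 1 = (μ S)⁻¹ • μ.restrict S := by
    rw [sphereShell, hd]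
  -- basic measure facts
  have hStop : μ S ≠ ⊤ := sphere_lt_top.ne
  have hSApos : 0 < μ (S ∩ A) := hemisphere_pos e₁ he₁
  have hS0 : μ S ≠ 0 := by
    intro hcon
    have := lt_of_lt_of_le hSApos (measure_mono (inter_subset_left))
    rw [hcon] at this
    exact lt_irrefl 0 this
  have hSmeas : MeasurableSet S := (isClosed_sphere).measurableSet
  have hAmeas : MeasurableSet A :=
    (isClosed_le ((continuous_id.inner continuous_const)) continuous_const).measurableSet
  set ν := μ.restrict S with hν
  have : IsFiniteMeasure ν := ⟨by rw [hν, Measure.restrict_apply_univ]; exact hStop.lt_top⟩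
  -- the integrand
  set f : ℝ → EuclideanSpace ℝ (Fin (m+1)) → ℝ :=
    fun β y => (r - ⟪y, e₁⟫) * ‖r • e₁ - y‖ ^ (β - 4) with hf
  -- norm bounds on the sphere
  have hre : ‖r • e₁‖ = r := by
    rw [norm_smul, he₁, Real.norm_eq_abs, abs_of_pos hr0, mul_one]
  have htlo : ∀ y ∈ S, 1 - r ≤ ‖r • e₁ - y‖ := by
    intro y hy
    simp only [hS, mem_sphere_iff_norm, sub_zero] at hy
    have h1 : |‖y‖ - ‖r • e₁‖| ≤ ‖y - r • e₁‖ := abs_norm_sub_norm_le _ _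
    rw [norm_sub_rev] at h1
    rw [hy, hre] at h1
    calc 1 - r ≤ |1 - r| := le_abs_self _
      _ ≤ ‖r • e₁ - y‖ := h1
  have hthi : ∀ y ∈ S, ‖r • e₁ - y‖ ≤ 1 + r := by
    intro y hy
    simp only [hS, mem_sphere_iff_norm, sub_zero] at hy
    calc ‖r • e₁ - y‖ ≤ ‖r • e₁‖ + ‖y‖ := norm_sub_le _ _
      _ = 1 + r := by rw [hre, hy]; ring
  have ht0 : ∀ y ∈ S, (0:ℝ) < ‖r • e₁ - y‖ := fun y hy =>
    lt_of_lt_of_le (by linarith) (htlo y hy)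
  -- measurability / integrability
  set fc : ℝ → EuclideanSpace ℝ (Fin (m+1)) → ℝ :=
    fun β y => (r - ⟪y, e₁⟫) * (max (1-r) ‖r • e₁ - y‖) ^ (β - 4) with hfc
  have hfc_cont : ∀ β : ℝ, Continuous (fc β) := by
    intro β
    apply Continuous.mul
    · exact continuous_const.sub (continuous_id.inner continuous_const)
    · apply Continuous.rpow_const
        (continuous_const.max ((continuous_const.sub continuous_id).norm))
      intro x
      left
      have h1 : (0:ℝ) < 1 - r := by linarith
      exact ne_of_gt (lt_of_lt_of_le h1 (le_max_left _ _))
  have hfc_eq : ∀ β : ℝ, ∀ y ∈ S, fc β y = f β y := by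
    intro β y hy
    rw [hfc, hf]
    simp only
    rw [max_eq_right (htlo y hy)]
  have hmeas : ∀ β : ℝ, AEStronglyMeasurable (f β) ν := by
    intro β
    apply (hfc_cont β).aestronglyMeasurable.congr
    rw [hν]
    exact (ae_restrict_iff' hSmeas).2 (ae_of_all _ (hfc_eq β))
  have hbound : ∀ β : ℝ, ∀ y ∈ S,
      ‖f β y‖ ≤ (r + 1) * max ((1-r) ^ (β-4)) ((1+r) ^ (β-4)) := by
    intro β y hy
    rw [hf]
    simp only
    rw [norm_mul, Real.norm_eq_abs, Real.norm_eq_abs,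
      abs_of_nonneg (Real.rpow_nonneg (norm_nonneg _) _)]
    have h1 : |r - ⟪y, e₁⟫| ≤ r + 1 := by
      have h2 : |⟪y, e₁⟫| ≤ ‖y‖ * ‖e₁‖ := abs_real_inner_le_norm _ _
      simp only [hS, mem_sphere_iff_norm, sub_zero] at hy
      rw [hy, he₁, one_mul] at h2
      rw [abs_le] at h2 ⊢
      constructor <;> [linarith [h2.2]; linarith [h2.1]]
    have h3 := (rpow_bounds (e := β - 4) (by linarith : (0:ℝ) < 1 - r)
      (htlo y hy) (hthi y hy)).2
    exact mul_le_mul h1 h3 (Real.rpow_nonneg (norm_nonneg _) _) (by linarith)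
  have hint : ∀ β : ℝ, Integrable (f β) ν := by
    intro β
    refine ⟨hmeas β, ?_⟩
    apply HasFiniteIntegral.of_bounded
      (C := (r + 1) * max ((1-r) ^ (β-4)) ((1+r) ^ (β-4)))
    rw [hν]
    exact (ae_restrict_iff' hSmeas).2 (ae_of_all _ (hbound β))
  -- rewrite g through the restricted measure
  set I : ℝ → ℝ := fun β => ∫ y, f β y ∂ν with hI
  set κ : ℝ := ((μ S)⁻¹).toReal with hκdef
  have hκ : 0 < κ := by
    rw [hκdef, ENNReal.toReal_inv]
    exact inv_pos.mpr (ENNReal.toReal_pos hS0 hStop)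
  have hgval : ∀ β : ℝ,
      (∫ y, (r - ⟪y, e₁⟫) * ‖r • e₁ - y‖ ^ (β - 4) ∂(sphereShell (m+1) 1)) = κ * I β := by
    intro β
    rw [hshell, integral_smul_measure]
    rfl
  beta_reduce at h0 ⊢
  rw [hgval α₀] at h0
  rw [hgval α]
  -- the comparison constant
  set c : ℝ := Real.sqrt (1 - r^2) with hc
  set β : ℝ := α - α₀ with hβ
  have hβ0 : 0 < β := by rw [hβ]; linarith
  have hc2 : c^2 = 1 - r^2 := Real.sq_sqrt (by nlinarith)
  have hc0 : 0 < c := Real.sqrt_pos.mpr (by nlinarith)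
  have hc1 : c < 1 := by
    rw [hc]
    have h := Real.sqrt_lt_sqrt (by nlinarith : (0:ℝ) ≤ 1 - r^2) (by nlinarith : 1 - r^2 < 1)
    rwa [Real.sqrt_one] at h
  set F : EuclideanSpace ℝ (Fin (m+1)) → ℝ := fun y => f α y - c ^ β * f α₀ y with hF
  have hFint : Integrable F ν := (hint α).sub ((hint α₀).const_mul _)
  have hIeq : I α = c ^ β * I α₀ + ∫ y, F y ∂ν := by
    rw [hF]
    rw [integral_sub (hint α) ((hint α₀).const_mul _), integral_const_mul]
    ring
  -- pointwise factorization on the sphere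
  have hsq : ∀ y ∈ S, ‖r • e₁ - y‖^2 = r^2 - 2*r*⟪y, e₁⟫ + 1 := by
    intro y hy
    simp only [hS, mem_sphere_iff_norm, sub_zero] at hy
    have h := norm_sub_sq_real (r • e₁) y
    rw [hre, hy, real_inner_smul_left, real_inner_comm] at h
    rw [h]; ring
  have hFfact : ∀ y ∈ S, F y =
      (r - ⟪y, e₁⟫) * (‖r • e₁ - y‖ ^ (α₀-4) * (‖r • e₁ - y‖ ^ β - c ^ β)) := by
    intro y hy
    rw [hF, hf]
    simp only
    rw [show α - 4 = (α₀ - 4) + β by rw [hβ]; ring, Real.rpow_add (ht0 y hy)]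
    ring
  have hF_nonneg : ∀ y ∈ S, 0 ≤ F y := by
    intro y hy
    rw [hFfact y hy]
    set w := ⟪y, e₁⟫ with hw
    set t := ‖r • e₁ - y‖ with hts
    have ht2 : t^2 = r^2 - 2*r*w + 1 := hsq y hy
    have htpos : 0 < t := ht0 y hy
    rcases le_or_gt w r with h1 | h1
    · have hct : c ≤ t := by
        apply le_of_sq_le_sq hc0.le htpos.le
        rw [hc2, ht2]; nlinarith
      have h2 : c ^ β ≤ t ^ β := Real.rpow_le_rpow hc0.le hct hβ0.le
      have h3 : (0:ℝ) < t ^ (α₀ - 4) := Real.rpow_pos_of_pos htpos _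
      apply mul_nonneg (by linarith)
      exact mul_nonneg h3.le (by linarith)
    · have htc : t < c := by
        have h4 : t^2 < c^2 := by rw [hc2, ht2]; nlinarith
        by_contra hcon
        push_neg at hcon
        nlinarith
      have h2 : t ^ β < c ^ β := Real.rpow_lt_rpow htpos.le htc hβ0
      have h3 : (0:ℝ) < t ^ (α₀ - 4) := Real.rpow_pos_of_pos htpos _
      have hneg : t ^ (α₀ - 4) * (t ^ β - c ^ β) ≤ 0 :=
        mul_nonpos_of_nonneg_of_nonpos h3.le (by linarith)
      nlinarith [mul_nonneg (by linarith : (0:ℝ) ≤ w - r)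
        (by linarith : (0:ℝ) ≤ -(t ^ (α₀ - 4) * (t ^ β - c ^ β)))]
  -- lower bound on S ∩ A
  set mlo : ℝ := min ((1-r) ^ (α₀-4)) ((1+r) ^ (α₀-4)) with hmlo
  have hmlo_pos : 0 < mlo :=
    lt_min (Real.rpow_pos_of_pos (by linarith) _) (Real.rpow_pos_of_pos (by linarith) _)
  set δ : ℝ := r * (mlo * (1 - c ^ β)) with hδ
  have hcβ1 : c ^ β < 1 := Real.rpow_lt_one hc0.le hc1 hβ0
  have hδpos : 0 < δ := by
    apply mul_pos hr0 (mul_pos hmlo_pos (by linarith))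
  have hF_big : ∀ y ∈ A ∩ S, δ ≤ F y := by
    rintro y ⟨hyA, hyS⟩
    rw [hFfact y hyS]
    simp only [hA, mem_setOf_eq] at hyA
    set w := ⟪y, e₁⟫ with hw
    set t := ‖r • e₁ - y‖ with hts
    have ht2 : t^2 = r^2 - 2*r*w + 1 := hsq y hyS
    have htpos : 0 < t := ht0 y hyS
    have ht1 : 1 ≤ t := by
      apply le_of_sq_le_sq zero_le_one htpos.le
      rw [ht2]; nlinarith
    have htβ : 1 ≤ t ^ β := by
      calc (1:ℝ) = 1 ^ β := (Real.one_rpow β).symm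
        _ ≤ t ^ β := Real.rpow_le_rpow zero_le_one ht1 hβ0.le
    have hmt : mlo ≤ t ^ (α₀-4) :=
      (rpow_bounds (by linarith : (0:ℝ) < 1 - r) (htlo y hyS) (hthi y hyS)).1
    rw [hδ]
    have hinner : mlo * (1 - c ^ β) ≤ t ^ (α₀-4) * (t ^ β - c ^ β) := by
      apply mul_le_mul hmt (by linarith) (by linarith) (by positivity)
    exact mul_le_mul (by linarith) hinner
      (mul_pos hmlo_pos (by linarith)).le (by linarith)
  -- assemble
  have hνA : (ν A) ≠ ⊤ := by
    apply ne_of_lt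
    calc ν A ≤ ν univ := measure_mono (subset_univ _)
      _ = μ S := by rw [hν, Measure.restrict_apply_univ]
      _ < ⊤ := hStop.lt_top
  have hAS : μ (A ∩ S) ≠ ⊤ := by
    apply ne_of_lt
    exact lt_of_le_of_lt (measure_mono (inter_subset_right)) hStop.lt_top
  have hJ1 : δ * (μ (A ∩ S)).toReal ≤ ∫ y in A, F y ∂ν := by
    rw [hν, Measure.restrict_restrict hAmeas]
    apply setIntegral_ge_of_const_le_real (hAmeas.inter hSmeas) hAS hF_big
    have hres := hFint.restrict (s := A)
    rw [hν, Measure.restrict_restrict hAmeas] at hres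
    exact hres
  have hJ2 : ∫ y in A, F y ∂ν ≤ ∫ y, F y ∂ν := by
    apply setIntegral_le_integral hFint
    rw [hν]
    exact (ae_restrict_iff' hSmeas).2 (ae_of_all _ hF_nonneg)
  have hASpos : 0 < (μ (A ∩ S)).toReal := by
    apply ENNReal.toReal_pos _ hAS
    rw [inter_comm]
    exact hSApos.ne'
  have hJpos : 0 < ∫ y, F y ∂ν :=
    lt_of_lt_of_le (mul_pos hδpos hASpos) (hJ1.trans hJ2)
  have hI0 : 0 ≤ I α₀ := by
    by_contra hcon
    push_neg at hcon
    nlinarith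
  have hIpos : 0 < I α :=
    lt_of_lt_of_le hJpos (by
      rw [hIeq]
      have : 0 ≤ c ^ β * I α₀ := mul_nonneg (Real.rpow_pos_of_pos hc0 β).le hI0
      linarith)
  exact mul_pos hκ hIpos
end
end

section
/- Let n ≥ 2, α = 4 and β = 2. A measure μ ∈ P₀(ℝⁿ) minimizes the interaction energy E(μ) = (1/2)∬ W_{4,2}(x−y) dμ(x)dμ(y) over P₀(ℝⁿ) if and only if μ is concentrated on the centered sphere of radius √(n/(2n+2)) (i.e. μ({x : |x| = √(n/(2n+2))}) = 1) and its second moments satisfy ∫ ⟨x,e_i⟩⟨x,e_j⟩ dμ(x) = δ_{ij}/(2n+2) for all 1 ≤ i, j ≤ n, where (e_i) is the standard orthonormal basis. -/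
open MeasureTheory Metric Set
open scoped ENNReal

noncomputable section

/-- `μ` belongs to `P₀(ℝⁿ)`: a probability measure with finite first moment and center of
mass at the origin. -/
def MemP0 {n : ℕ} (μ : Measure (EuclideanSpace ℝ (Fin n))) : Prop :=
  IsProbabilityMeasure μ ∧ Integrable (fun x => ‖x‖) μ ∧
    (∫ x, x ∂μ) = (0 : EuclideanSpace ℝ (Fin n))

namespace Min13

abbrev Eu (n : ℕ) := EuclideanSpace ℝ (Fin n)

def gfun {n : ℕ} (p : Eu n × Eu n) : ℝ := (‖p.1 - p.2‖ ^ 2 - 1) ^ 2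

lemma gfun_nonneg {n : ℕ} (p : Eu n × Eu n) : 0 ≤ gfun p := sq_nonneg _

lemma gfun_continuous {n : ℕ} : Continuous (gfun (n := n)) := by
  unfold gfun; fun_prop

lemma wab_eq {n : ℕ} (z : Eu n) :
    Wab 4 2 z - (1 / (4:ℝ) - 1 / 2) = (4:ℝ)⁻¹ * ((‖z‖ ^ 2 - 1) ^ 2) := by
  have h4 : ‖z‖ ^ (4:ℝ) = ‖z‖ ^ (4:ℕ) := by
    rw [show ((4:ℝ) = ((4:ℕ):ℝ)) by norm_num, Real.rpow_natCast]
  have h2 : ‖z‖ ^ (2:ℝ) = ‖z‖ ^ (2:ℕ) := by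
    rw [show ((2:ℝ) = ((2:ℕ):ℝ)) by norm_num, Real.rpow_natCast]
  simp only [Wab, h4, h2]
  ring

lemma energy_eq {n : ℕ} (μ : Measure (Eu n)) :
    energy 4 2 μ = (8:ℝ≥0∞)⁻¹ * ∫⁻ p, ENNReal.ofReal (gfun p) ∂(μ.prod μ) := by
  unfold energy
  have : ∀ p : Eu n × Eu n,
      ENNReal.ofReal (Wab 4 2 (p.1 - p.2) - (1 / (4:ℝ) - 1 / 2))
        = ENNReal.ofReal ((4:ℝ)⁻¹) * ENNReal.ofReal (gfun p) := by
    intro p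
    rw [wab_eq, ENNReal.ofReal_mul (by norm_num)]
    rfl
  simp_rw [this]
  rw [lintegral_const_mul' _ _ (by simp), ← mul_assoc]
  congr 1
  rw [ENNReal.ofReal_inv_of_pos (by norm_num)]
  simp only [ENNReal.ofReal_ofNat]
  rw [one_div, ← ENNReal.mul_inv (by norm_num) (by norm_num)]
  norm_num

end Min13

namespace Min13

variable {n : ℕ}

lemma coord_abs_le_norm (x : Eu n) (i : Fin n) : |x i| ≤ ‖x‖ := by
  have h1 : ‖x i‖ ^ 2 ≤ ∑ j, ‖x j‖ ^ 2 :=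
    Finset.single_le_sum (fun j _ => sq_nonneg ‖x j‖) (Finset.mem_univ i)
  have := Real.sqrt_le_sqrt h1
  rwa [Real.sqrt_sq (norm_nonneg _), ← EuclideanSpace.norm_eq, Real.norm_eq_abs] at this

lemma norm_sq_eq_sum (x : Eu n) : ‖x‖ ^ 2 = ∑ i, (x i) ^ 2 := by
  rw [EuclideanSpace.norm_eq, Real.sq_sqrt (Finset.sum_nonneg fun i _ => sq_nonneg _)]
  exact Finset.sum_congr rfl fun i _ => by rw [Real.norm_eq_abs, sq_abs]

lemma cont_coord (i : Fin n) : Continuous (fun x : Eu n => x i) :=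
  (EuclideanSpace.proj (𝕜 := ℝ) i).continuous

lemma pow_le_one_add_pow4 {t : ℝ} (ht : 0 ≤ t) {k : ℕ} (hk : k ≤ 4) :
    t ^ k ≤ 1 + t ^ 4 := by
  interval_cases k <;>
    nlinarith [sq_nonneg (t^2 - 1), sq_nonneg (t - 1), sq_nonneg (t^2 - t), sq_nonneg t,
      mul_nonneg (mul_nonneg ht ht) ht, pow_nonneg ht 4, sq_nonneg (t^2 + t), sq_nonneg (t+1)]

section Pack

variable (μ : Measure (Eu n)) [IsProbabilityMeasure μ]

lemma int_pow (I4 : Integrable (fun x : Eu n => ‖x‖ ^ 4) μ) (k : ℕ) (hk : k ≤ 4) : Integrable (fun x : Eu n => ‖x‖ ^ k) μ := by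
  refine Integrable.mono ((integrable_const (1:ℝ)).add I4)
    (Continuous.aestronglyMeasurable (by fun_prop)) (Filter.Eventually.of_forall fun x => ?_)
  have h := pow_le_one_add_pow4 (norm_nonneg x) hk
  have h2 : (0:ℝ) ≤ 1 + ‖x‖ ^ 4 := by positivity
  simp only [Pi.add_apply, Real.norm_eq_abs, abs_of_nonneg (pow_nonneg (norm_nonneg x) _)]
  rw [abs_of_nonneg h2]
  simpa using h

lemma int_coord_mul (I4 : Integrable (fun x : Eu n => ‖x‖ ^ 4) μ) (i j : Fin n) : Integrable (fun x : Eu n => x i * x j) μ := by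
  refine Integrable.mono (int_pow μ I4 2 (by norm_num))
    (Continuous.aestronglyMeasurable ((cont_coord i).mul (cont_coord j)))
    (Filter.Eventually.of_forall fun x => ?_)
  rw [Real.norm_eq_abs, Real.norm_eq_abs, abs_of_nonneg (sq_nonneg ‖x‖ : (0:ℝ) ≤ ‖x‖^2), abs_mul]
  calc |x i| * |x j| ≤ ‖x‖ * ‖x‖ :=
        mul_le_mul (coord_abs_le_norm x i) (coord_abs_le_norm x j) (abs_nonneg _) (norm_nonneg _)
    _ = ‖x‖ ^ 2 := (sq ‖x‖).symm

lemma int_normsq_coord (I4 : Integrable (fun x : Eu n => ‖x‖ ^ 4) μ) (i : Fin n) : Integrable (fun x : Eu n => ‖x‖ ^ 2 * x i) μ := by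
  refine Integrable.mono (int_pow μ I4 3 (by norm_num))
    (Continuous.aestronglyMeasurable ((continuous_norm.pow 2).mul (cont_coord i)))
    (Filter.Eventually.of_forall fun x => ?_)
  rw [Real.norm_eq_abs, Real.norm_eq_abs, abs_of_nonneg (pow_nonneg (norm_nonneg x) 3), abs_mul,
    abs_of_nonneg (sq_nonneg ‖x‖ : (0:ℝ) ≤ ‖x‖^2)]
  calc ‖x‖^2 * |x i| ≤ ‖x‖^2 * ‖x‖ :=
        mul_le_mul_of_nonneg_left (coord_abs_le_norm x i) (sq_nonneg _)
    _ = ‖x‖ ^ 3 := by ring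

lemma int_coord (I4 : Integrable (fun x : Eu n => ‖x‖ ^ 4) μ) (i : Fin n) : Integrable (fun x : Eu n => x i) μ := by
  refine Integrable.mono (int_pow μ I4 1 (by norm_num))
    (Continuous.aestronglyMeasurable (cont_coord i)) (Filter.Eventually.of_forall fun x => ?_)
  simpa [Real.norm_eq_abs, abs_of_nonneg (norm_nonneg x)] using coord_abs_le_norm x i

lemma int_id (I4 : Integrable (fun x : Eu n => ‖x‖ ^ 4) μ) : Integrable (fun x : Eu n => x) μ := by
  have h := (integrable_norm_iff (aestronglyMeasurable_id (μ := μ))).mp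
    (by simpa using int_pow μ I4 1 (by norm_num))
  exact h

lemma integral_coord_eq_zero (I4 : Integrable (fun x : Eu n => ‖x‖ ^ 4) μ) (hc : (∫ x, x ∂μ) = 0) (i : Fin n) :
    (∫ x, x i ∂μ) = 0 := by
  have h := (EuclideanSpace.proj (𝕜 := ℝ) i).integral_comp_comm (int_id μ I4)
  simpa [hc] using h

end Pack

end Min13

namespace Min13

variable {n : ℕ}

lemma inner_eq_sum (x y : Eu n) : (inner ℝ x y : ℝ) = ∑ i, x i * y i := by
  simp [PiLp.inner_apply, RCLike.inner_apply, conj_trivial, mul_comm]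

lemma gfun_expand (x y : Eu n) : gfun (x, y) =
    ‖x‖^4 + ‖y‖^4 + 2*(‖x‖^2*‖y‖^2) + 4*(∑ i, ∑ j, (x i*x j)*(y i*y j))
    + (-4)*(∑ i, (‖x‖^2*x i)*y i) + (-4)*(∑ i, x i*(‖y‖^2*y i)) + 4*(∑ i, x i*y i)
    + (-2)*‖x‖^2 + (-2)*‖y‖^2 + 1 := by
  have hs : (∑ i, x i * y i)^2 = ∑ i, ∑ j, (x i * x j) * (y i * y j) := by
    rw [sq, Finset.sum_mul_sum]
    exact Finset.sum_congr rfl fun i _ => Finset.sum_congr rfl fun j _ => by ring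
  have h2 : (∑ i, (‖x‖^2 * x i) * y i) = ‖x‖^2 * ∑ i, x i * y i := by
    rw [Finset.mul_sum]; exact Finset.sum_congr rfl fun i _ => by ring
  have h3 : (∑ i, x i * (‖y‖^2 * y i)) = ‖y‖^2 * ∑ i, x i * y i := by
    rw [Finset.mul_sum]; exact Finset.sum_congr rfl fun i _ => by ring
  show (‖x - y‖^2 - 1)^2 = _
  rw [norm_sub_sq_real, inner_eq_sum, ← hs, h2, h3]
  ring

end Min13

namespace Min13

variable {n : ℕ}

lemma integral_one {μ : Measure (Eu n)} [IsProbabilityMeasure μ] :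
    (∫ _x : Eu n, (1:ℝ) ∂μ) = 1 := by simp

lemma integral_gfun (μ : Measure (Eu n)) [IsProbabilityMeasure μ]
    (hc : (∫ x, x ∂μ) = 0) (I4 : Integrable (fun x : Eu n => ‖x‖ ^ 4) μ) :
    ∫ p, gfun p ∂(μ.prod μ) =
      2 * (∫ x, ‖x‖^4 ∂μ) + 2 * (∫ x, ‖x‖^2 ∂μ)^2
      + 4 * (∑ i, ∑ j, (∫ x, x i * x j ∂μ)^2) - 4 * (∫ x, ‖x‖^2 ∂μ) + 1 := by
  have I2 := int_pow μ I4 2 (by norm_num)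
  have Iij := int_coord_mul μ I4
  have I2i := int_normsq_coord μ I4
  have Ii := int_coord μ I4
  have hzero : ∀ i, (∫ x, x i ∂μ) = 0 := integral_coord_eq_zero μ I4 hc
  -- integrability of the ten terms on the product
  have J1 : Integrable (fun p : Eu n × Eu n => ‖p.1‖^4) (μ.prod μ) := by
    simpa using I4.mul_prod (integrable_const (1:ℝ))
  have J2 : Integrable (fun p : Eu n × Eu n => ‖p.2‖^4) (μ.prod μ) := by
    simpa using (integrable_const (1:ℝ)).mul_prod I4
  have J3 : Integrable (fun p : Eu n × Eu n => 2*(‖p.1‖^2*‖p.2‖^2)) (μ.prod μ) :=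
    (I2.mul_prod I2).const_mul 2
  have J4 : Integrable (fun p : Eu n × Eu n =>
      4*(∑ i, ∑ j, (p.1 i*p.1 j)*(p.2 i*p.2 j))) (μ.prod μ) :=
    (integrable_finset_sum _ fun i _ => integrable_finset_sum _ fun j _ =>
      (Iij i j).mul_prod (Iij i j)).const_mul 4
  have J5 : Integrable (fun p : Eu n × Eu n =>
      (-4)*(∑ i, (‖p.1‖^2*p.1 i)*p.2 i)) (μ.prod μ) :=
    (integrable_finset_sum _ fun i _ => (I2i i).mul_prod (Ii i)).const_mul (-4)
  have J6 : Integrable (fun p : Eu n × Eu n =>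
      (-4)*(∑ i, p.1 i*(‖p.2‖^2*p.2 i))) (μ.prod μ) :=
    (integrable_finset_sum _ fun i _ => (Ii i).mul_prod (I2i i)).const_mul (-4)
  have J7 : Integrable (fun p : Eu n × Eu n => 4*(∑ i, p.1 i*p.2 i)) (μ.prod μ) :=
    (integrable_finset_sum _ fun i _ => (Ii i).mul_prod (Ii i)).const_mul 4
  have J8 : Integrable (fun p : Eu n × Eu n => (-2)*‖p.1‖^2) (μ.prod μ) := by
    have : Integrable (fun p : Eu n × Eu n => ‖p.1‖^2) (μ.prod μ) := by
      simpa using I2.mul_prod (integrable_const (1:ℝ))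
    exact this.const_mul (-2)
  have J9 : Integrable (fun p : Eu n × Eu n => (-2)*‖p.2‖^2) (μ.prod μ) := by
    have : Integrable (fun p : Eu n × Eu n => ‖p.2‖^2) (μ.prod μ) := by
      simpa using (integrable_const (1:ℝ)).mul_prod I2
    exact this.const_mul (-2)
  -- values of the ten integrals
  have E1 : ∫ p, ‖p.1‖^4 ∂(μ.prod μ) = ∫ x, ‖x‖^4 ∂μ := by
    have := integral_prod_mul (μ := μ) (ν := μ) (fun x : Eu n => ‖x‖^4) (fun _ => (1:ℝ))
    simpa [integral_one] using this
  have E2 : ∫ p, ‖p.2‖^4 ∂(μ.prod μ) = ∫ x, ‖x‖^4 ∂μ := by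
    have := integral_prod_mul (μ := μ) (ν := μ) (fun _ => (1:ℝ)) (fun x : Eu n => ‖x‖^4)
    simpa [integral_one] using this
  have E3 : ∫ p, 2*(‖p.1‖^2*‖p.2‖^2) ∂(μ.prod μ) = 2 * (∫ x, ‖x‖^2 ∂μ)^2 := by
    rw [integral_const_mul]
    have := integral_prod_mul (μ := μ) (ν := μ) (fun x : Eu n => ‖x‖^2) (fun x : Eu n => ‖x‖^2)
    rw [this]; ring
  have E4 : ∫ p, 4*(∑ i, ∑ j, (p.1 i*p.1 j)*(p.2 i*p.2 j)) ∂(μ.prod μ)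
      = 4 * (∑ i, ∑ j, (∫ x, x i * x j ∂μ)^2) := by
    rw [integral_const_mul,
      integral_finset_sum _ (fun i _ => integrable_finset_sum _ fun j _ =>
        (Iij i j).mul_prod (Iij i j))]
    congr 1
    refine Finset.sum_congr rfl fun i _ => ?_
    rw [integral_finset_sum _ (fun j _ => (Iij i j).mul_prod (Iij i j))]
    refine Finset.sum_congr rfl fun j _ => ?_
    have := integral_prod_mul (μ := μ) (ν := μ)
      (fun x : Eu n => x i * x j) (fun y : Eu n => y i * y j)
    rw [this, sq]
  have E5 : ∫ p, (-4)*(∑ i, (‖p.1‖^2*p.1 i)*p.2 i) ∂(μ.prod μ) = 0 := by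
    rw [integral_const_mul,
      integral_finset_sum _ (fun i _ => (I2i i).mul_prod (Ii i))]
    have : ∀ i : Fin n, (∫ p : Eu n × Eu n, (‖p.1‖^2*p.1 i)*p.2 i ∂(μ.prod μ)) = 0 := by
      intro i
      have := integral_prod_mul (μ := μ) (ν := μ)
        (fun x : Eu n => ‖x‖^2 * x i) (fun y : Eu n => y i)
      rw [this, hzero i, mul_zero]
    rw [Finset.sum_congr rfl fun i _ => this i]
    simp
  have E6 : ∫ p, (-4)*(∑ i, p.1 i*(‖p.2‖^2*p.2 i)) ∂(μ.prod μ) = 0 := by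
    rw [integral_const_mul,
      integral_finset_sum _ (fun i _ => (Ii i).mul_prod (I2i i))]
    have : ∀ i : Fin n, (∫ p : Eu n × Eu n, p.1 i*(‖p.2‖^2*p.2 i) ∂(μ.prod μ)) = 0 := by
      intro i
      have := integral_prod_mul (μ := μ) (ν := μ)
        (fun x : Eu n => x i) (fun y : Eu n => ‖y‖^2 * y i)
      rw [this, hzero i, zero_mul]
    rw [Finset.sum_congr rfl fun i _ => this i]
    simp
  have E7 : ∫ p, 4*(∑ i, p.1 i*p.2 i) ∂(μ.prod μ) = 0 := by
    rw [integral_const_mul,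
      integral_finset_sum _ (fun i _ => (Ii i).mul_prod (Ii i))]
    have : ∀ i : Fin n, (∫ p : Eu n × Eu n, p.1 i*p.2 i ∂(μ.prod μ)) = 0 := by
      intro i
      have := integral_prod_mul (μ := μ) (ν := μ) (fun x : Eu n => x i) (fun y : Eu n => y i)
      rw [this, hzero i, zero_mul]
    rw [Finset.sum_congr rfl fun i _ => this i]
    simp
  have E8 : ∫ p, (-2)*‖p.1‖^2 ∂(μ.prod μ) = (-2) * (∫ x, ‖x‖^2 ∂μ) := by
    rw [integral_const_mul]
    have := integral_prod_mul (μ := μ) (ν := μ) (fun x : Eu n => ‖x‖^2) (fun _ => (1:ℝ))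
    simp only [mul_one] at this
    rw [this, integral_one, mul_one]
  have E9 : ∫ p, (-2)*‖p.2‖^2 ∂(μ.prod μ) = (-2) * (∫ x, ‖x‖^2 ∂μ) := by
    rw [integral_const_mul]
    have := integral_prod_mul (μ := μ) (ν := μ) (fun _ => (1:ℝ)) (fun x : Eu n => ‖x‖^2)
    simp only [one_mul] at this
    rw [this, integral_one, one_mul]
  have hg : (fun p : Eu n × Eu n => gfun p) = (fun p : Eu n × Eu n =>
      ‖p.1‖^4 + ‖p.2‖^4 + 2*(‖p.1‖^2*‖p.2‖^2)
      + 4*(∑ i, ∑ j, (p.1 i*p.1 j)*(p.2 i*p.2 j))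
      + (-4)*(∑ i, (‖p.1‖^2*p.1 i)*p.2 i) + (-4)*(∑ i, p.1 i*(‖p.2‖^2*p.2 i))
      + 4*(∑ i, p.1 i*p.2 i) + (-2)*‖p.1‖^2 + (-2)*‖p.2‖^2 + 1) := by
    funext p
    simpa using gfun_expand p.1 p.2
  rw [hg]
  rw [integral_add (by exact ((((((((J1.add J2).add J3).add J4).add J5).add J6).add J7).add J8).add J9)) (integrable_const 1)]
  rw [integral_add (by exact (((((((J1.add J2).add J3).add J4).add J5).add J6).add J7).add J8)) J9]
  rw [integral_add (by exact ((((((J1.add J2).add J3).add J4).add J5).add J6).add J7)) J8]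
  rw [integral_add (by exact (((((J1.add J2).add J3).add J4).add J5).add J6)) J7]
  rw [integral_add (by exact ((((J1.add J2).add J3).add J4).add J5)) J6]
  rw [integral_add (by exact (((J1.add J2).add J3).add J4)) J5]
  rw [integral_add (by exact ((J1.add J2).add J3)) J4]
  rw [integral_add (by exact (J1.add J2)) J3]
  rw [integral_add J1 J2]
  rw [E1, E2, E3, E4, E5, E6, E7, E8, E9, integral_const]
  simp only [measure_univ, ENNReal.toReal_one, probReal_univ, smul_eq_mul, one_mul, mul_one]
  ring

end Min13

namespace Min13

variable {n : ℕ}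

lemma norm_sq_eq_sum_mul (x : Eu n) : ‖x‖ ^ 2 = ∑ i, x i * x i := by
  rw [norm_sq_eq_sum]; exact Finset.sum_congr rfl fun i _ => sq (x i)

lemma trace_eq_m2 (μ : Measure (Eu n)) [IsProbabilityMeasure μ]
    (I4 : Integrable (fun x : Eu n => ‖x‖ ^ 4) μ) :
    (∑ i, ∫ x, x i * x i ∂μ) = ∫ x, ‖x‖^2 ∂μ := by
  rw [show (fun x : Eu n => ‖x‖^2) = fun x => ∑ i, x i * x i from
      funext fun x => norm_sq_eq_sum_mul x]
  exact (integral_finset_sum _ fun i _ => int_coord_mul μ I4 i i).symm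

lemma variance_eq (μ : Measure (Eu n)) [IsProbabilityMeasure μ]
    (I4 : Integrable (fun x : Eu n => ‖x‖ ^ 4) μ) :
    (∫ x, (‖x‖^2 - (∫ y, ‖y‖^2 ∂μ))^2 ∂μ)
      = (∫ x, ‖x‖^4 ∂μ) - (∫ x, ‖x‖^2 ∂μ)^2 := by
  have I2 := int_pow μ I4 2 (by norm_num)
  set m2 := ∫ y, ‖y‖^2 ∂μ with hm2
  have hfun : (fun x : Eu n => (‖x‖^2 - m2)^2)
      = fun x => (‖x‖^4 - (2*m2)*‖x‖^2) + m2^2 := funext fun x => by ring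
  rw [hfun, integral_add (show Integrable (fun x : Eu n => ‖x‖^4 - (2*m2)*‖x‖^2) μ from
      I4.sub (I2.const_mul (2*m2))) (integrable_const _),
    integral_sub I4 (I2.const_mul (2*m2)), integral_const_mul, integral_const]
  simp only [measure_univ, ENNReal.toReal_one, probReal_univ, smul_eq_mul, one_mul]
  ring

lemma dsum_eq (μ : Measure (Eu n)) [IsProbabilityMeasure μ] (hn : 1 ≤ n)
    (I4 : Integrable (fun x : Eu n => ‖x‖ ^ 4) μ) :
    (∑ i, ∑ j, ((∫ x, x i * x j ∂μ) - if i = j then (∫ x, ‖x‖^2 ∂μ)/n else 0)^2)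
      = (∑ i, ∑ j, (∫ x, x i * x j ∂μ)^2) - (∫ x, ‖x‖^2 ∂μ)^2/n := by
  have hn' : (n:ℝ) ≠ 0 := Nat.cast_ne_zero.mpr (by omega)
  set c := (∫ x, ‖x‖^2 ∂μ)/n with hc
  set M := fun i j => (∫ x, x i * x j ∂μ) with hM
  have step : ∀ i : Fin n, (∑ j, (M i j - if i = j then c else 0)^2)
      = (∑ j, (M i j)^2) - (2*c*M i i - c^2) := by
    intro i
    have h1 : ∀ j : Fin n, (M i j - if i = j then c else 0)^2
        = (M i j)^2 - (if i = j then 2*c*M i j - c^2 else 0) := by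
      intro j; by_cases h : i = j <;> simp [h] <;> ring
    rw [Finset.sum_congr rfl fun j _ => h1 j, Finset.sum_sub_distrib,
      Finset.sum_ite_eq Finset.univ i (fun j => 2*c*M i j - c^2)]
    simp
  rw [Finset.sum_congr rfl fun i _ => step i, Finset.sum_sub_distrib]
  have htr : (∑ i, M i i) = ∫ x, ‖x‖^2 ∂μ := trace_eq_m2 μ I4
  have : (∑ i : Fin n, (2*c*M i i - c^2)) = 2*c*(∑ i, M i i) - n*c^2 := by
    rw [Finset.sum_sub_distrib, ← Finset.mul_sum]
    simp [Finset.card_univ, mul_comm]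
  rw [this, htr, hc]
  field_simp
  ring

lemma integral_gfun_canonical (μ : Measure (Eu n)) [IsProbabilityMeasure μ] (hn : 1 ≤ n)
    (hc : (∫ x, x ∂μ) = 0) (I4 : Integrable (fun x : Eu n => ‖x‖ ^ 4) μ) :
    ∫ p, gfun p ∂(μ.prod μ) =
      1/((n:ℝ)+1) + 2 * (∫ x, (‖x‖^2 - (∫ y, ‖y‖^2 ∂μ))^2 ∂μ)
      + 4 * (∑ i, ∑ j, ((∫ x, x i * x j ∂μ) - if i = j then (∫ y, ‖y‖^2 ∂μ)/n else 0)^2)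
      + (4*((n:ℝ)+1)/n) * ((∫ y, ‖y‖^2 ∂μ) - n/(2*((n:ℝ)+1)))^2 := by
  have hn' : (n:ℝ) ≠ 0 := Nat.cast_ne_zero.mpr (by omega)
  have hn1 : (n:ℝ) + 1 ≠ 0 := by positivity
  rw [integral_gfun μ hc I4, variance_eq μ I4, dsum_eq μ hn I4]
  field_simp
  ring

end Min13

namespace Min13

variable {n : ℕ}

lemma gfun_le (x y : Eu n) : gfun (x, y) ≤ 12*‖x‖^4 + 12*‖y‖^4 + 3 := by
  have ht : ‖x - y‖ ≤ ‖x‖ + ‖y‖ := norm_sub_le x y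
  have h0 : (0:ℝ) ≤ ‖x - y‖ := norm_nonneg _
  have hx : (0:ℝ) ≤ ‖x‖ := norm_nonneg _
  have hy : (0:ℝ) ≤ ‖y‖ := norm_nonneg _
  show (‖x - y‖^2 - 1)^2 ≤ _
  nlinarith [sq_nonneg (‖x-y‖^2 - 2*‖x‖^2 - 2*‖y‖^2), sq_nonneg (‖x‖^2 - ‖y‖^2),
    sq_nonneg (‖x‖ - ‖y‖), sq_nonneg (‖x‖ + ‖y‖), mul_nonneg hx hy,
    sq_nonneg (‖x-y‖^2 + 1), mul_le_mul ht ht h0 (by positivity : (0:ℝ) ≤ ‖x‖+‖y‖)]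

lemma int_gfun_prod (μ : Measure (Eu n)) [IsProbabilityMeasure μ]
    (I4 : Integrable (fun x : Eu n => ‖x‖ ^ 4) μ) :
    Integrable gfun (μ.prod μ) := by
  have J1 : Integrable (fun p : Eu n × Eu n => ‖p.1‖^4) (μ.prod μ) := by
    simpa using I4.mul_prod (integrable_const (1:ℝ))
  have J2 : Integrable (fun p : Eu n × Eu n => ‖p.2‖^4) (μ.prod μ) := by
    simpa using (integrable_const (1:ℝ)).mul_prod I4
  refine Integrable.mono (((J1.const_mul 12).add (J2.const_mul 12)).add (integrable_const 3))
    (Continuous.aestronglyMeasurable gfun_continuous) (Filter.Eventually.of_forall fun p => ?_)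
  have h1 := gfun_le p.1 p.2
  have h2 := gfun_nonneg p
  have h3 : (0:ℝ) ≤ 12*‖p.1‖^4 + 12*‖p.2‖^4 + 3 := by positivity
  rw [Real.norm_eq_abs, Real.norm_eq_abs, abs_of_nonneg h2]
  rw [show gfun p = gfun (p.1, p.2) from rfl] at *
  calc gfun (p.1, p.2) ≤ 12*‖p.1‖^4 + 12*‖p.2‖^4 + 3 := h1
    _ ≤ |12*‖p.1‖^4 + 12*‖p.2‖^4 + 3| := le_abs_self _

lemma energy_formula (μ : Measure (Eu n)) [IsProbabilityMeasure μ] (hn : 1 ≤ n)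
    (hc : (∫ x, x ∂μ) = 0) (I4 : Integrable (fun x : Eu n => ‖x‖ ^ 4) μ) :
    energy 4 2 μ = (8:ℝ≥0∞)⁻¹ * ENNReal.ofReal (
      1/((n:ℝ)+1) + 2 * (∫ x, (‖x‖^2 - (∫ y, ‖y‖^2 ∂μ))^2 ∂μ)
      + 4 * (∑ i, ∑ j, ((∫ x, x i * x j ∂μ) - if i = j then (∫ y, ‖y‖^2 ∂μ)/n else 0)^2)
      + (4*((n:ℝ)+1)/n) * ((∫ y, ‖y‖^2 ∂μ) - n/(2*((n:ℝ)+1)))^2) := by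
  rw [energy_eq, ← ofReal_integral_eq_lintegral_ofReal (int_gfun_prod μ I4)
      (Filter.Eventually.of_forall gfun_nonneg),
    integral_gfun_canonical μ hn hc I4]

end Min13

namespace Min13

variable {n : ℕ}

lemma norm4_bound (x₀ y : Eu n) : ‖y‖^4 ≤ 16 * gfun (x₀, y) + (16 + 8*‖x₀‖^4) := by
  have ht : ‖y‖ ≤ ‖x₀‖ + ‖x₀ - y‖ := by
    calc ‖y‖ = ‖x₀ - (x₀ - y)‖ := by rw [sub_sub_cancel]
      _ ≤ ‖x₀‖ + ‖x₀ - y‖ := norm_sub_le _ _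
  have hx : (0:ℝ) ≤ ‖x₀‖ := norm_nonneg _
  have hy : (0:ℝ) ≤ ‖y‖ := norm_nonneg _
  have hb : (0:ℝ) ≤ ‖x₀ - y‖ := norm_nonneg _
  show ‖y‖^4 ≤ 16 * (‖x₀ - y‖^2 - 1)^2 + (16 + 8*‖x₀‖^4)
  nlinarith [mul_le_mul ht ht hy (by positivity : (0:ℝ) ≤ ‖x₀‖ + ‖x₀ - y‖),
    sq_nonneg (‖x₀ - y‖^2 - 1), sq_nonneg (‖x₀‖ - ‖x₀ - y‖), sq_nonneg (‖x₀‖ + ‖x₀ - y‖),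
    sq_nonneg (‖x₀‖^2 - ‖x₀ - y‖^2), sq_nonneg (‖x₀ - y‖^2 - 2), mul_nonneg hx hb,
    sq_nonneg ‖x₀ - y‖, sq_nonneg ‖x₀‖, sq_nonneg (‖y‖^2 - 2*‖x₀‖^2 - 2*‖x₀ - y‖^2)]

lemma I4_of_finite (μ : Measure (Eu n)) [IsProbabilityMeasure μ]
    (hfin : (∫⁻ p, ENNReal.ofReal (gfun p) ∂(μ.prod μ)) ≠ ∞) :
    Integrable (fun x : Eu n => ‖x‖ ^ 4) μ := by
  have hmeas : Measurable (fun p : Eu n × Eu n => ENNReal.ofReal (gfun p)) :=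
    ENNReal.measurable_ofReal.comp gfun_continuous.measurable
  rw [lintegral_prod _ hmeas.aemeasurable] at hfin
  have hmeas2 : Measurable (fun x : Eu n => ∫⁻ y, ENNReal.ofReal (gfun (x, y)) ∂μ) :=
    Measurable.lintegral_prod_right hmeas
  have hae : ∀ᵐ x ∂μ, (∫⁻ y, ENNReal.ofReal (gfun (x, y)) ∂μ) < ∞ :=
    ae_lt_top hmeas2 hfin
  haveI : (ae μ).NeBot := MeasureTheory.ae_neBot.mpr (IsProbabilityMeasure.ne_zero μ)
  obtain ⟨x₀, hx₀⟩ := hae.exists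
  have hptwise : ∀ y : Eu n, ENNReal.ofReal (‖y‖^4)
      ≤ 16 * ENNReal.ofReal (gfun (x₀, y)) + ENNReal.ofReal (16 + 8*‖x₀‖^4) := by
    intro y
    calc ENNReal.ofReal (‖y‖^4)
        ≤ ENNReal.ofReal (16 * gfun (x₀, y) + (16 + 8*‖x₀‖^4)) :=
          ENNReal.ofReal_le_ofReal (norm4_bound x₀ y)
      _ ≤ ENNReal.ofReal (16 * gfun (x₀, y)) + ENNReal.ofReal (16 + 8*‖x₀‖^4) :=
          ENNReal.ofReal_add_le
      _ = 16 * ENNReal.ofReal (gfun (x₀, y)) + ENNReal.ofReal (16 + 8*‖x₀‖^4) := by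
          rw [ENNReal.ofReal_mul (by norm_num : (0:ℝ) ≤ 16)]
          norm_num
  have hbound : (∫⁻ y, ENNReal.ofReal (‖y‖^4) ∂μ) ≠ ∞ := by
    have h1 : (∫⁻ y, ENNReal.ofReal (‖y‖^4) ∂μ)
        ≤ ∫⁻ y, (16 * ENNReal.ofReal (gfun (x₀, y)) + ENNReal.ofReal (16 + 8*‖x₀‖^4)) ∂μ :=
      lintegral_mono hptwise
    have h2 : (∫⁻ y, (16 * ENNReal.ofReal (gfun (x₀, y))
        + ENNReal.ofReal (16 + 8*‖x₀‖^4)) ∂μ)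
        = 16 * (∫⁻ y, ENNReal.ofReal (gfun (x₀, y)) ∂μ)
          + ENNReal.ofReal (16 + 8*‖x₀‖^4) := by
      rw [lintegral_add_right _ measurable_const, lintegral_const_mul' _ _ (by norm_num),
        lintegral_const, measure_univ, mul_one]
    refine ne_top_of_le_ne_top ?_ (h1.trans_eq h2)
    exact ENNReal.add_ne_top.mpr ⟨ENNReal.mul_ne_top (by norm_num) hx₀.ne, ENNReal.ofReal_ne_top⟩
  refine ⟨Continuous.aestronglyMeasurable (by fun_prop), ?_⟩
  rw [hasFiniteIntegral_iff_ofReal (Filter.Eventually.of_forall fun y => by positivity)]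
  exact lt_top_iff_ne_top.mpr hbound

end Min13

namespace Min13

variable {n : ℕ}

lemma sphere_eq_norm_set (r : ℝ) :
    (sphere (0 : Eu n) r) = {x : Eu n | ‖x‖ = r} := by
  ext x; simp [mem_sphere_zero_iff_norm]

lemma int_vsq (μ : Measure (Eu n)) [IsProbabilityMeasure μ]
    (I4 : Integrable (fun x : Eu n => ‖x‖ ^ 4) μ) (c : ℝ) :
    Integrable (fun x : Eu n => (‖x‖^2 - c)^2) μ := by
  have I2 := int_pow μ I4 2 (by norm_num)
  have : (fun x : Eu n => (‖x‖^2 - c)^2)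
      = fun x => (‖x‖^4 - (2*c)*‖x‖^2) + c^2 := funext fun x => by ring
  rw [this]
  exact (I4.sub (I2.const_mul (2*c))).add (integrable_const _)

lemma energy_lb (hn : 1 ≤ n) (μ : Measure (Eu n)) (hμ : MemP0 μ) :
    (8:ℝ≥0∞)⁻¹ * ENNReal.ofReal (1/((n:ℝ)+1)) ≤ energy 4 2 μ := by
  obtain ⟨hP, -, hc⟩ := hμ
  haveI := hP
  by_cases hfin : (∫⁻ p, ENNReal.ofReal (gfun p) ∂(μ.prod μ)) = ∞
  · rw [energy_eq, hfin, ENNReal.mul_top (by norm_num)]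
    exact le_top
  · have I4 := I4_of_finite μ hfin
    rw [energy_formula μ hn hc I4]
    refine mul_le_mul_right (ENNReal.ofReal_le_ofReal ?_) _
    have h1 : (0:ℝ) ≤ ∫ x, (‖x‖^2 - (∫ y, ‖y‖^2 ∂μ))^2 ∂μ :=
      integral_nonneg fun x => sq_nonneg _
    have h2 : (0:ℝ) ≤ ∑ i, ∑ j,
        ((∫ x, x i * x j ∂μ) - if i = j then (∫ y, ‖y‖^2 ∂μ)/n else 0)^2 :=
      Finset.sum_nonneg fun i _ => Finset.sum_nonneg fun j _ => sq_nonneg _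
    have h3 : (0:ℝ) ≤ (4*((n:ℝ)+1)/n) * ((∫ y, ‖y‖^2 ∂μ) - n/(2*((n:ℝ)+1)))^2 := by
      positivity
    linarith

lemma ae_norm_eq_of_sphere (μ : Measure (Eu n)) [IsProbabilityMeasure μ] {r : ℝ}
    (hs : μ (sphere (0 : Eu n) r) = 1) : ∀ᵐ x ∂μ, ‖x‖ = r := by
  have hms : MeasurableSet (sphere (0 : Eu n) r) :=
    (isClosed_sphere).measurableSet
  have hcompl : μ (sphere (0 : Eu n) r)ᶜ = 0 :=
    (prob_compl_eq_zero_iff hms).mpr hs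
  rw [ae_iff]
  convert hcompl using 2
  rw [sphere_eq_norm_set]
  ext x; simp

lemma energy_of_conditions (hn : 1 ≤ n) (μ : Measure (Eu n)) (hμ : MemP0 μ)
    (hs : μ (sphere (0 : Eu n) (Real.sqrt ((n : ℝ) / (2 * n + 2)))) = 1)
    (hmom : ∀ i j : Fin n, (∫ x, x i * x j ∂μ) =
      if i = j then 1 / (2 * (n : ℝ) + 2) else 0) :
    energy 4 2 μ = (8:ℝ≥0∞)⁻¹ * ENNReal.ofReal (1/((n:ℝ)+1)) := by
  obtain ⟨hP, -, hc⟩ := hμ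
  haveI := hP
  have hn' : (0:ℝ) < (n:ℝ) := by exact_mod_cast (by omega : 0 < n)
  set r := Real.sqrt ((n : ℝ) / (2 * n + 2)) with hr
  have hr2 : r^2 = (n:ℝ)/(2*(n:ℝ)+2) := Real.sq_sqrt (by positivity)
  have haes : ∀ᵐ x ∂μ, ‖x‖ = r := ae_norm_eq_of_sphere μ hs
  have I4 : Integrable (fun x : Eu n => ‖x‖ ^ 4) μ :=
    (integrable_const (r^4)).congr (haes.mono fun x hx => by simp [hx])
  have hm2 : (∫ y, ‖y‖^2 ∂μ) = r^2 := by
    rw [integral_congr_ae (g := fun _ => r^2) (haes.mono fun x hx => by rw [hx])]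
    simp
  rw [energy_formula μ hn hc I4]
  congr 1
  have hV : (∫ x, (‖x‖^2 - (∫ y, ‖y‖^2 ∂μ))^2 ∂μ) = 0 := by
    rw [hm2, integral_congr_ae (g := fun _ => (0:ℝ))
      (haes.mono fun x hx => by rw [hx]; ring)]
    simp
  have hD : (∑ i, ∑ j, ((∫ x, x i * x j ∂μ)
      - if i = j then (∫ y, ‖y‖^2 ∂μ)/n else 0)^2) = 0 := by
    refine Finset.sum_eq_zero fun i _ => Finset.sum_eq_zero fun j _ => ?_
    rw [hmom i j, hm2, hr2]
    by_cases h : i = j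
    · simp only [h, if_true]
      have he : (1:ℝ)/(2*(n:ℝ)+2) - ((n:ℝ)/(2*(n:ℝ)+2))/(n:ℝ) = 0 := by field_simp; ring
      rw [he, zero_pow two_ne_zero]
    · simp [h]
  have hq : ((∫ y, ‖y‖^2 ∂μ) - (n:ℝ)/(2*((n:ℝ)+1))) = 0 := by
    rw [hm2, hr2]; field_simp; ring
  rw [hV, hD, hq]
  norm_num

end Min13

namespace Min13

variable {n : ℕ}

lemma conditions_of_energy_eq (hn : 1 ≤ n) (μ : Measure (Eu n)) (hμ : MemP0 μ)
    (he : energy 4 2 μ = (8:ℝ≥0∞)⁻¹ * ENNReal.ofReal (1/((n:ℝ)+1))) :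
    μ (sphere (0 : Eu n) (Real.sqrt ((n : ℝ) / (2 * n + 2)))) = 1 ∧
      ∀ i j : Fin n, (∫ x, x i * x j ∂μ) =
        if i = j then 1 / (2 * (n : ℝ) + 2) else 0 := by
  obtain ⟨hP, -, hc⟩ := hμ
  haveI := hP
  have hn' : (0:ℝ) < (n:ℝ) := by exact_mod_cast (by omega : 0 < n)
  have hfin : (∫⁻ p, ENNReal.ofReal (gfun p) ∂(μ.prod μ)) ≠ ∞ := by
    intro hcon
    rw [energy_eq, hcon, ENNReal.mul_top (by norm_num)] at he
    exact (ENNReal.mul_ne_top (by norm_num) ENNReal.ofReal_ne_top) he.symm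
  have I4 := I4_of_finite μ hfin
  rw [energy_formula μ hn hc I4] at he
  set m2 := ∫ y, ‖y‖^2 ∂μ with hm2def
  set V := ∫ x, (‖x‖^2 - m2)^2 ∂μ with hVdef
  set D := ∑ i, ∑ j, ((∫ x, x i * x j ∂μ) - if i = j then m2/n else 0)^2 with hDdef
  set q := m2 - (n:ℝ)/(2*((n:ℝ)+1)) with hqdef
  have hV0 : (0:ℝ) ≤ V := integral_nonneg fun x => sq_nonneg _
  have hD0 : (0:ℝ) ≤ D :=
    Finset.sum_nonneg fun i _ => Finset.sum_nonneg fun j _ => sq_nonneg _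
  have hq0 : (0:ℝ) ≤ (4*((n:ℝ)+1)/n) * q^2 := by positivity
  have hreal : 1/((n:ℝ)+1) + 2*V + 4*D + (4*((n:ℝ)+1)/n) * q^2 = 1/((n:ℝ)+1) := by
    have h8 := (ENNReal.mul_right_inj (a := (8:ℝ≥0∞)⁻¹) (by norm_num) (by norm_num)).mp he
    rw [ENNReal.ofReal_eq_ofReal_iff (by positivity) (by positivity)] at h8
    exact h8
  have hV : V = 0 := by nlinarith
  have hD : D = 0 := by nlinarith
  have hq : q = 0 := by
    have h2 : (4*((n:ℝ)+1)/n) * q^2 = 0 := by nlinarith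
    have h3 : q^2 = 0 := by
      have : (4*((n:ℝ)+1)/n) ≠ 0 := by positivity
      exact (mul_eq_zero.mp h2).resolve_left this
    exact pow_eq_zero_iff two_ne_zero |>.mp h3
  have hm2 : m2 = (n:ℝ)/(2*((n:ℝ)+1)) := by linarith [sub_eq_zero.mp hq]
  -- sphere condition
  have haesq : ∀ᵐ x ∂μ, (‖x‖^2 - m2)^2 = 0 := by
    have h := (integral_eq_zero_iff_of_nonneg (f := fun x : Eu n => (‖x‖^2 - m2)^2)
      (fun x => sq_nonneg _) (int_vsq μ I4 m2)).mp hV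
    filter_upwards [h] with x hx using hx
  set r := Real.sqrt ((n : ℝ) / (2 * n + 2)) with hrdef
  have hr2 : r^2 = (n:ℝ)/(2*(n:ℝ)+2) := Real.sq_sqrt (by positivity)
  have hm2r : m2 = r^2 := by rw [hm2, hr2]; ring
  have haes : ∀ᵐ x ∂μ, ‖x‖ = r := by
    refine haesq.mono fun x hx => ?_
    have h1 : ‖x‖^2 = m2 := by
      have := pow_eq_zero_iff two_ne_zero |>.mp hx
      linarith [sub_eq_zero.mp this]
    have h2 : ‖x‖ = Real.sqrt m2 := by
      rw [← Real.sqrt_sq (norm_nonneg x), h1]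
    rw [h2, hm2r, Real.sqrt_sq (Real.sqrt_nonneg _)]
  have hsphere : μ (sphere (0 : Eu n) r) = 1 := by
    have hms : MeasurableSet (sphere (0 : Eu n) r) := isClosed_sphere.measurableSet
    rw [← prob_compl_eq_zero_iff hms]
    have : {x : Eu n | ¬ (‖x‖ = r)} = (sphere (0 : Eu n) r)ᶜ := by
      rw [sphere_eq_norm_set]; ext x; simp
    rw [← this]
    exact (ae_iff.mp haes)
  refine ⟨hsphere, fun i j => ?_⟩
  -- moment condition
  have hterm : ((∫ x, x i * x j ∂μ) - if i = j then m2/n else 0)^2 = 0 := by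
    have h1 := (Finset.sum_eq_zero_iff_of_nonneg
      (fun i _ => Finset.sum_nonneg fun j _ => sq_nonneg _)).mp hD i (Finset.mem_univ i)
    have h2 := (Finset.sum_eq_zero_iff_of_nonneg
      (fun j _ => sq_nonneg _)).mp h1 j (Finset.mem_univ j)
    exact h2
  have h3 : (∫ x, x i * x j ∂μ) = if i = j then m2/n else 0 :=
    sub_eq_zero.mp (pow_eq_zero_iff two_ne_zero |>.mp hterm)
  rw [h3, hm2]
  by_cases h : i = j
  · simp only [h, if_true]
    field_simp
  · simp [h]

end Min13

namespace Min13

variable {n : ℕ}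

def wpt (n : ℕ) (i : Fin n) : Eu n :=
  (Real.sqrt ((n : ℝ) / (2 * n + 2))) • EuclideanSpace.single i 1

def wit (n : ℕ) : Measure (Eu n) :=
  ((2*n : ℕ) : ℝ≥0∞)⁻¹ • ∑ i : Fin n, (Measure.dirac (wpt n i) + Measure.dirac (-(wpt n i)))

lemma integrable_dirac'' {E' : Type*} [NormedAddCommGroup E'] {f : Eu n → E'}
    (hf : StronglyMeasurable f) (a : Eu n) : Integrable f (Measure.dirac a) := by
  refine ⟨hf.aestronglyMeasurable, ?_⟩
  rw [HasFiniteIntegral, lintegral_dirac' a hf.enorm]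
  exact enorm_lt_top

lemma integrable_wit (hn : 1 ≤ n) {E' : Type*} [NormedAddCommGroup E'] {f : Eu n → E'}
    (hf : StronglyMeasurable f) : Integrable f (wit n) := by
  unfold wit
  refine Integrable.smul_measure ?_ (by simp; omega)
  refine integrable_finset_sum_measure.mpr fun i _ => ?_
  exact (integrable_dirac'' hf _).add_measure (integrable_dirac'' hf _)

lemma integral_wit {E' : Type*} [NormedAddCommGroup E'] [NormedSpace ℝ E'] [CompleteSpace E']
    {f : Eu n → E'} (hf : StronglyMeasurable f) :
    ∫ x, f x ∂(wit n) = ((2*n : ℕ) : ℝ)⁻¹ • ∑ i : Fin n, (f (wpt n i) + f (-(wpt n i))) := by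
  unfold wit
  rw [integral_smul_measure,
    integral_finset_sum_measure (fun i _ =>
      (integrable_dirac'' hf _).add_measure (integrable_dirac'' hf _))]
  congr 1
  · simp [ENNReal.toReal_inv]
  · refine Finset.sum_congr rfl fun i _ => ?_
    rw [integral_add_measure (integrable_dirac'' hf _) (integrable_dirac'' hf _),
      integral_dirac' f _ hf, integral_dirac' f _ hf]

lemma wit_univ (hn : 1 ≤ n) : wit n univ = 1 := by
  unfold wit
  rw [Measure.smul_apply, Measure.finset_sum_apply]
  simp only [Measure.add_apply, Measure.dirac_apply' _ MeasurableSet.univ]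
  simp only [indicator_univ, Pi.one_apply, Finset.sum_const, Finset.card_univ, Fintype.card_fin,
    smul_eq_mul]
  rw [nsmul_eq_mul]
  rw [show ((n:ℝ≥0∞))*(1+1) = ((2*n:ℕ):ℝ≥0∞) by push_cast; ring]
  exact ENNReal.inv_mul_cancel (by simp; omega) (by finiteness)

end Min13

namespace Min13

variable {n : ℕ}

lemma norm_wpt (hn : 1 ≤ n) (i : Fin n) :
    ‖wpt n i‖ = Real.sqrt ((n : ℝ) / (2 * n + 2)) := by
  unfold wpt
  rw [norm_smul, EuclideanSpace.norm_single]
  simp [Real.norm_eq_abs, abs_of_nonneg (Real.sqrt_nonneg _)]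

lemma wpt_apply (i k : Fin n) :
    wpt n i k = Real.sqrt ((n : ℝ) / (2 * n + 2)) * (if k = i then 1 else 0) := by
  unfold wpt
  rw [PiLp.smul_apply, EuclideanSpace.single_apply]
  simp

lemma wit_isProb (hn : 1 ≤ n) : IsProbabilityMeasure (wit n) := ⟨wit_univ hn⟩

lemma wit_sphere (hn : 1 ≤ n) :
    wit n (sphere (0 : Eu n) (Real.sqrt ((n : ℝ) / (2 * n + 2)))) = 1 := by
  set r := Real.sqrt ((n : ℝ) / (2 * n + 2)) with hr
  have hmem : ∀ i : Fin n, wpt n i ∈ sphere (0 : Eu n) r :=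
    fun i => mem_sphere_zero_iff_norm.mpr (norm_wpt hn i)
  have hmem' : ∀ i : Fin n, -(wpt n i) ∈ sphere (0 : Eu n) r := by
    intro i
    rw [mem_sphere_zero_iff_norm, norm_neg]
    exact norm_wpt hn i
  have hms : MeasurableSet (sphere (0 : Eu n) r) := isClosed_sphere.measurableSet
  unfold wit
  rw [Measure.smul_apply, Measure.finset_sum_apply]
  simp only [Measure.add_apply, Measure.dirac_apply' _ hms]
  have h1 : ∀ i : Fin n,
      (sphere (0 : Eu n) r).indicator (1 : Eu n → ℝ≥0∞) (wpt n i)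
      + (sphere (0 : Eu n) r).indicator 1 (-(wpt n i)) = 2 := by
    intro i
    rw [indicator_of_mem (hmem i), indicator_of_mem (hmem' i)]
    norm_num [Pi.one_apply]
  rw [Finset.sum_congr rfl fun i _ => h1 i]
  simp only [Finset.sum_const, Finset.card_univ, Fintype.card_fin, smul_eq_mul, nsmul_eq_mul]
  rw [show ((n:ℝ≥0∞))*2 = ((2*n:ℕ):ℝ≥0∞) by push_cast; ring]
  exact ENNReal.inv_mul_cancel (by simp; omega) (by finiteness)

lemma wit_center (hn : 1 ≤ n) : (∫ x, x ∂(wit n)) = (0 : Eu n) := by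
  rw [integral_wit (f := fun x : Eu n => x) (continuous_id.stronglyMeasurable)]
  simp

lemma wit_integrable_norm (hn : 1 ≤ n) : Integrable (fun x : Eu n => ‖x‖) (wit n) :=
  integrable_wit hn continuous_norm.stronglyMeasurable

lemma wit_memP0 (hn : 1 ≤ n) : MemP0 (wit n) :=
  ⟨wit_isProb hn, wit_integrable_norm hn, wit_center hn⟩

lemma wit_moments (hn : 1 ≤ n) (i j : Fin n) :
    (∫ x, x i * x j ∂(wit n)) = if i = j then 1 / (2 * (n : ℝ) + 2) else 0 := by
  have hn' : (0:ℝ) < (n:ℝ) := by exact_mod_cast (by omega : 0 < n)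
  have hcont : StronglyMeasurable (fun x : Eu n => x i * x j) :=
    ((cont_coord i).mul (cont_coord j)).stronglyMeasurable
  rw [integral_wit hcont]
  set s := Real.sqrt ((n : ℝ) / (2 * n + 2)) with hs
  set c := (n : ℝ) / (2 * n + 2) with hcdef
  have hr2 : s * s = c := Real.mul_self_sqrt (by positivity)
  have key : ∀ (u v : ℝ), (s*u) * (s*v) + (-(s*u))*(-(s*v)) = 2*c*u*v := by
    intro u v
    calc (s*u) * (s*v) + (-(s*u))*(-(s*v)) = 2*(s*s)*(u*v) := by ring
      _ = 2*c*(u*v) := by rw [hr2]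
      _ = 2*c*u*v := by ring
  have hneg : ∀ (k l : Fin n), (-(wpt n k)) l = -(wpt n k l) := fun k l => rfl
  have hterm : ∀ k : Fin n, ((wpt n k) i * (wpt n k) j
      + (-(wpt n k)) i * (-(wpt n k)) j)
      = 2*c*(if i = k then 1 else 0)*(if j = k then 1 else 0) := by
    intro k
    rw [hneg, hneg, wpt_apply, wpt_apply]
    exact key _ _
  rw [Finset.sum_congr rfl fun k _ => hterm k]
  by_cases h : i = j
  · subst h
    rw [Finset.sum_congr rfl (fun k _ => show
        (2*c*(if i = k then 1 else 0)*(if i = k then 1 else 0)) = if i = k then 2*c else 0 from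
        by by_cases hk : i = k <;> simp [hk]),
      Finset.sum_ite_eq Finset.univ i (fun _ => 2*c)]
    simp only [Finset.mem_univ, if_true, if_pos rfl, smul_eq_mul]
    rw [hcdef]
    push_cast
    field_simp
  · rw [Finset.sum_eq_zero (fun k _ => by
      by_cases h1 : i = k <;> by_cases h2 : j = k
      · exact absurd (h1.trans h2.symm) h
      all_goals simp [h1, h2])]
    simp [h]

end Min13


/-- for `n ≥ 2`, `α = 4`, `β = 2`, a measure `μ ∈ P₀(ℝⁿ)` minimizes the
interaction energy over `P₀(ℝⁿ)` iff it is concentrated on the centered sphere of radius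
`√(n/(2n+2))` and has second moments `∫ xᵢxⱼ dμ = δᵢⱼ/(2n+2)`. -/
theorem minimizers_alpha_four (n : ℕ) (hn : 2 ≤ n)
    (μ : Measure (EuclideanSpace ℝ (Fin n))) (hμ : MemP0 μ) :
    (∀ ν : Measure (EuclideanSpace ℝ (Fin n)), MemP0 ν → energy 4 2 μ ≤ energy 4 2 ν) ↔
      (μ (sphere (0 : EuclideanSpace ℝ (Fin n))
          (Real.sqrt ((n : ℝ) / (2 * n + 2)))) = 1 ∧
        ∀ i j : Fin n, (∫ x : EuclideanSpace ℝ (Fin n), x i * x j ∂μ) =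
          if i = j then 1 / (2 * (n : ℝ) + 2) else 0) := by
  have hn1 : 1 ≤ n := by omega
  constructor
  · intro h
    have hwit_val : energy 4 2 (Min13.wit n)
        = (8:ℝ≥0∞)⁻¹ * ENNReal.ofReal (1/((n:ℝ)+1)) :=
      Min13.energy_of_conditions hn1 _ (Min13.wit_memP0 hn1) (Min13.wit_sphere hn1)
        (Min13.wit_moments hn1)
    have heq : energy 4 2 μ = (8:ℝ≥0∞)⁻¹ * ENNReal.ofReal (1/((n:ℝ)+1)) :=
      le_antisymm (hwit_val ▸ h (Min13.wit n) (Min13.wit_memP0 hn1))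
        (Min13.energy_lb hn1 μ hμ)
    exact Min13.conditions_of_energy_eq hn1 μ hμ heq
  · rintro ⟨hs, hm⟩ ν hν
    rw [Min13.energy_of_conditions hn1 μ hμ hs hm]
    exact Min13.energy_lb hn1 ν hν
end
end
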